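/- arXiv:1801.00986 — 11 statements merged into one kernel-verified Lean document; each statement's English description precedes it below -/
import Mathlib

section
/- Let H be a Hermitian matrix. The vector of diagonal entries of H, arranged in decreasing order, equals the vector of eigenvalues of H (in decreasing order) if and only if H is diagonal. -/
/-!
For Hermitian `H`, `∑ᵢ λᵢ² = tr (H Hᴴ) = ∑ᵢⱼ |Hᵢⱼ|²`, while `∑ᵢ Hᵢᵢ²` only sees the diagonal entries.
So if the diagonal entries and the eigenvalues agree as multisets, every off-diagonal entry
vanishes. Conversely, the diagonal entries of a diagonal matrix are the roots of its
characteristic polynomial, which for a Hermitian matrix are its eigenvalues.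
-/

/-- Sort a list of reals in decreasing order. -/
noncomputable def sortDesc (l : List ℝ) : List ℝ :=
  ((l : Multiset ℝ).sort (· ≤ ·)).reverse

open Polynomial

lemma sortDesc_inj {l l' : List ℝ} :
    sortDesc l = sortDesc l' ↔ (l : Multiset ℝ) = l' := by
  refine ⟨fun h => ?_, fun h => by rw [sortDesc, sortDesc, h]⟩
  rw [← Multiset.sort_eq (l : Multiset ℝ) (· ≤ ·), ← Multiset.sort_eq (l' : Multiset ℝ) (· ≤ ·),
    List.reverse_inj.mp h]

namespace Matrix

variable {𝕜 α : Type*} [RCLike 𝕜] {m n : Type*}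

lemma IsHermitian.re_apply_self_sq {A : Matrix n n 𝕜} (hA : A.IsHermitian) (i : n) :
    RCLike.re (A i i) ^ 2 = ‖A i i‖ ^ 2 := by
  conv_rhs => rw [← hA.coe_re_apply_self i]
  rw [RCLike.norm_ofReal, sq_abs]

variable [Fintype m] [Fintype n]

lemma isDiag_of_sum_sq_norm_le_sum_sq_norm_diag [NormedAddCommGroup α] {A : Matrix n n α}
    (h : ∑ i, ∑ j, ‖A i j‖ ^ 2 ≤ ∑ i, ‖A i i‖ ^ 2) : A.IsDiag := by
  classical
  intro i j hij
  have hoff : ∑ i, ∑ j ∈ Finset.univ.erase i, ‖A i j‖ ^ 2 ≤ 0 := by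
    have split (i : n) : ∑ j, ‖A i j‖ ^ 2 = ‖A i i‖ ^ 2 + ∑ j ∈ Finset.univ.erase i, ‖A i j‖ ^ 2 :=
      (Finset.add_sum_erase _ _ (Finset.mem_univ i)).symm
    rw [Finset.sum_congr rfl fun i _ => split i, Finset.sum_add_distrib] at h
    linarith
  have hij : ‖A i j‖ ^ 2 ≤ 0 :=
    calc ‖A i j‖ ^ 2 ≤ ∑ j ∈ Finset.univ.erase i, ‖A i j‖ ^ 2 :=
          Finset.single_le_sum (f := fun j => ‖A i j‖ ^ 2) (fun _ _ => by positivity)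
            (Finset.mem_erase.mpr ⟨hij.symm, Finset.mem_univ j⟩)
      _ ≤ ∑ i, ∑ j ∈ Finset.univ.erase i, ‖A i j‖ ^ 2 :=
          Finset.single_le_sum (f := fun i => ∑ j ∈ Finset.univ.erase i, ‖A i j‖ ^ 2)
            (fun _ _ => by positivity) (Finset.mem_univ i)
      _ ≤ 0 := hoff
  simpa using hij

lemma trace_mul_conjTranspose_self (A : Matrix m n 𝕜) :
    (A * Aᴴ).trace = ∑ i, ∑ j, ((‖A i j‖ ^ 2 : ℝ) : 𝕜) := by
  simp [trace, mul_apply, RCLike.mul_conj]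

lemma roots_charpoly_diagonal [DecidableEq n] {R : Type*} [CommRing R] [IsDomain R] (d : n → R) :
    (diagonal d).charpoly.roots = Finset.univ.val.map d := by
  rw [charpoly_diagonal,
    roots_prod _ _ (Finset.prod_ne_zero_iff.mpr fun i _ => X_sub_C_ne_zero (d i))]
  simp

namespace IsHermitian

variable [DecidableEq n] {A : Matrix n n 𝕜}

lemma trace_mul_self (hA : A.IsHermitian) :
    (A * A).trace = ∑ i, ((hA.eigenvalues i ^ 2 : ℝ) : 𝕜) := by
  conv_lhs => rw [hA.spectral_theorem, ← map_mul, Unitary.conjStarAlgAut_apply, trace_mul_cycle,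
    Unitary.coe_star_mul_self, one_mul, diagonal_mul_diagonal, trace_diagonal]
  simp [sq]

lemma sum_sq_norm_eq_sum_sq_eigenvalues (hA : A.IsHermitian) :
    ∑ i, ∑ j, ‖A i j‖ ^ 2 = ∑ i, hA.eigenvalues i ^ 2 := by
  have h := trace_mul_conjTranspose_self A
  rw [hA.eq, hA.trace_mul_self] at h
  exact_mod_cast h.symm

lemma map_eigenvalues_eq_of_isDiag (hA : A.IsHermitian) (hd : A.IsDiag) :
    Finset.univ.val.map hA.eigenvalues = Finset.univ.val.map fun i => RCLike.re (A i i) := by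
  have hroots : A.charpoly.roots = Finset.univ.val.map fun i => A i i := by
    conv_lhs => rw [← hd.diagonal_diag]
    exact roots_charpoly_diagonal _
  apply Multiset.map_injective (RCLike.ofReal_injective (K := 𝕜))
  rw [Multiset.map_map, Multiset.map_map, ← hA.roots_charpoly_eq_eigenvalues, hroots]
  simp [hA.coe_re_apply_self]

lemma isDiag_of_map_eigenvalues_eq (hA : A.IsHermitian)
    (h : Finset.univ.val.map hA.eigenvalues = Finset.univ.val.map fun i => RCLike.re (A i i)) :
    A.IsDiag := by
  refine isDiag_of_sum_sq_norm_le_sum_sq_norm_diag (le_of_eq ?_)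
  have hsq := congrArg (fun s : Multiset ℝ => (s.map (· ^ 2)).sum) h
  simp only [Multiset.map_map, Function.comp_def] at hsq
  rw [hA.sum_sq_norm_eq_sum_sq_eigenvalues]
  calc ∑ i, hA.eigenvalues i ^ 2 = ∑ i, RCLike.re (A i i) ^ 2 := hsq
    _ = ∑ i, ‖A i i‖ ^ 2 := Finset.sum_congr rfl fun i _ => hA.re_apply_self_sq i

lemma map_eigenvalues_eq_iff_isDiag (hA : A.IsHermitian) :
    Finset.univ.val.map hA.eigenvalues = Finset.univ.val.map (fun i => RCLike.re (A i i)) ↔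
      A.IsDiag :=
  ⟨hA.isDiag_of_map_eigenvalues_eq, hA.map_eigenvalues_eq_of_isDiag⟩

end IsHermitian
end Matrix

/-- For a Hermitian matrix `H`, the diagonal entries arranged decreasingly
equal the eigenvalues arranged decreasingly iff `H` is a diagonal matrix. -/
theorem diag_eq_spec_iff_isDiag {n : ℕ} (H : Matrix (Fin n) (Fin n) ℂ)
    (hH : H.IsHermitian) :
    sortDesc (List.ofFn fun i => (H i i).re) = sortDesc (List.ofFn hH.eigenvalues) ↔
      H.IsDiag := by
  rw [sortDesc_inj, ← Fin.univ_val_map, ← Fin.univ_val_map, eq_comm]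
  exact hH.map_eigenvalues_eq_iff_isDiag
end

section
/- Schur's theorem: for a Hermitian matrix H, the vector of diagonal entries of H (arranged decreasingly) is majorized by the vector of eigenvalues of H (arranged decreasingly). -/
/-!
Write `H = U D Uᴴ` with `U` unitary and `D` the diagonal of eigenvalues. Then
`H i i = ∑ j |U i j|² λ j`, i.e. the diagonal is `P λ` for the doubly stochastic matrix
`P = (|U i j|²)`. By Birkhoff's theorem `P` is a convex combination of permutation matrices, so
the linear functional `M ↦ ∑ i ∈ s, (M λ) i` is at most its value at some permutation matrix,
which is a sum of `|s|` eigenvalues.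
-/

/-- `Majorizes y x` : the vector `x` is majorized by `y`, i.e. for every `k` the sum of
any `k` entries of `x` is bounded by the sum of the `k` largest entries of `y`
(equivalently, by the sum of some `k` entries of `y`), and the total sums agree. -/
def Majorizes {n : ℕ} (y x : Fin n → ℝ) : Prop :=
  (∀ s : Finset (Fin n), ∃ t : Finset (Fin n), t.card = s.card ∧
      ∑ i ∈ s, x i ≤ ∑ i ∈ t, y i) ∧
    ∑ i, x i = ∑ i, y i

open Matrix

section DoublyStochastic

variable {n : Type*} [Fintype n] [DecidableEq n]

theorem exists_card_eq_sum_mulVec_le_of_mem_doublyStochastic {M : Matrix n n ℝ}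
    (hM : M ∈ doublyStochastic ℝ n) (x : n → ℝ) (s : Finset n) :
    ∃ t : Finset n, t.card = s.card ∧ ∑ i ∈ s, (M *ᵥ x) i ≤ ∑ i ∈ t, x i := by
  let f : Matrix n n ℝ →ₗ[ℝ] ℝ :=
    { toFun := fun M => ∑ i ∈ s, (M *ᵥ x) i
      map_add' := fun M N => by simp only [add_mulVec, Pi.add_apply, Finset.sum_add_distrib]
      map_smul' := fun c M => by simp [smul_mulVec, Finset.mul_sum] }
  rw [← SetLike.mem_coe, doublyStochastic_eq_convexHull_permMatrix] at hM
  obtain ⟨_, ⟨σ, rfl⟩, hσ⟩ :=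
    (f.convexOn (convex_convexHull ℝ _)).exists_ge_of_mem_convexHull (subset_convexHull ℝ _) hM
  refine ⟨s.map σ.toEmbedding, s.card_map _, ?_⟩
  simpa [f, permMatrix_mulVec] using hσ

theorem Matrix.of_norm_sq_mem_doublyStochastic_of_mem_unitaryGroup {𝕜 : Type*} [RCLike 𝕜]
    {U : Matrix n n 𝕜} (hU : U ∈ unitaryGroup n 𝕜) :
    of (fun i j => ‖U i j‖ ^ 2) ∈ doublyStochastic ℝ n := by
  refine mem_doublyStochastic_iff_sum.mpr ⟨fun i j => sq_nonneg _, fun i => ?_, fun j => ?_⟩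
  · have h := congr_fun₂ (mem_unitaryGroup_iff.mp hU) i i
    simp only [mul_apply, star_apply, RCLike.star_def, RCLike.mul_conj, one_apply_eq] at h
    exact_mod_cast h
  · have h := congr_fun₂ (mem_unitaryGroup_iff'.mp hU) j j
    simp only [mul_apply, star_apply, RCLike.star_def, RCLike.conj_mul, one_apply_eq] at h
    exact_mod_cast h

theorem Matrix.IsHermitian.re_diag_eq_mulVec_eigenvalues {𝕜 : Type*} [RCLike 𝕜]
    {A : Matrix n n 𝕜} (hA : A.IsHermitian) :
    (fun i => RCLike.re (A i i)) =
      of (fun i j => ‖(hA.eigenvectorUnitary : Matrix n n 𝕜) i j‖ ^ 2) *ᵥ hA.eigenvalues := by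
  ext i
  conv_lhs => rw [hA.spectral_theorem, Unitary.conjStarAlgAut_apply, mul_apply]
  simp only [mul_diagonal, star_apply, Function.comp_apply, mulVec, dotProduct, of_apply, map_sum]
  refine Finset.sum_congr rfl fun j _ => ?_
  rw [mul_right_comm, RCLike.star_def, RCLike.mul_conj]
  norm_cast

end DoublyStochastic

theorem majorizes_mulVec_of_mem_doublyStochastic {m : ℕ} {M : Matrix (Fin m) (Fin m) ℝ}
    (hM : M ∈ doublyStochastic ℝ (Fin m)) (x : Fin m → ℝ) : Majorizes x (M *ᵥ x) :=
  ⟨exists_card_eq_sum_mulVec_le_of_mem_doublyStochastic hM x,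
    sum_mulVec_of_mem_doublyStochastic hM⟩

/-- Schur's theorem: the diagonal of a Hermitian matrix is majorized by its
vector of eigenvalues. -/
theorem schur_majorization {n : ℕ} (H : Matrix (Fin n) (Fin n) ℂ)
    (hH : H.IsHermitian) :
    Majorizes hH.eigenvalues (fun i => (H i i).re) := by
  have hdiag : (fun i => (H i i).re) = _ := hH.re_diag_eq_mulVec_eigenvalues
  rw [hdiag]
  exact majorizes_mulVec_of_mem_doublyStochastic
    (of_norm_sq_mem_doublyStochastic_of_mem_unitaryGroup hH.eigenvectorUnitary.2) _
end

section
/- Let ρ be a density operator on C^{k_A} ⊗ C^{k_B} with margins ρ_A = tr_B ρ and ρ_B = tr_A ρ of full rank, i.e., rank ρ_A = k_A and rank ρ_B = k_B, with k_A ≤ k_B. Then ⌈k_B/k_A⌉ ≤ rank ρ ≤ k_A·k_B. -/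
open ComplexOrder

/-- Partial trace over the second tensor factor. -/
noncomputable def trB {n m : ℕ} (ρ : Matrix (Fin n × Fin m) (Fin n × Fin m) ℂ) :
    Matrix (Fin n) (Fin n) ℂ :=
  fun a a' => ∑ b : Fin m, ρ (a, b) (a', b)

/-- Partial trace over the first tensor factor. -/
noncomputable def trA {n m : ℕ} (ρ : Matrix (Fin n × Fin m) (Fin n × Fin m) ℂ) :
    Matrix (Fin m) (Fin m) ℂ :=
  fun b b' => ∑ a : Fin n, ρ (a, b) (a, b')

/-!
The upper bound is the size of `ρ`. For the lower bound, `tr_A ρ` is the sum of the `k_A`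
diagonal blocks `(⟨a, b| ρ |a, b'⟩)_{b, b'}` of `ρ`; each block is a submatrix of `ρ`, so has rank
at most `rank ρ`, and rank is subadditive. Hence `k_B = rank (tr_A ρ) ≤ k_A · rank ρ`.
-/

namespace Matrix

variable {K m n ι : Type*} [Field K] [Fintype n]

theorem cast_rank_eq_rank_mulVecLin (A : Matrix m n K) :
    (A.rank : Cardinal) = LinearMap.rank A.mulVecLin :=
  Module.finrank_eq_rank _ _

theorem rank_finsetSum_le (s : Finset ι) (f : ι → Matrix m n K) :
    (∑ i ∈ s, f i).rank ≤ ∑ i ∈ s, (f i).rank := by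
  classical
  have hsum : (∑ i ∈ s, f i).mulVecLin = ∑ i ∈ s, (f i).mulVecLin := by
    simp only [← toLin'_apply', map_sum]
  have hle := LinearMap.rank_finsetSum_le s fun i => (f i).mulVecLin
  rw [← hsum, ← cast_rank_eq_rank_mulVecLin] at hle
  simp only [← cast_rank_eq_rank_mulVecLin] at hle
  exact_mod_cast hle

end Matrix

theorem trA_eq_sum_submatrix {n m : ℕ} (ρ : Matrix (Fin n × Fin m) (Fin n × Fin m) ℂ) :
    trA ρ = ∑ a : Fin n, ρ.submatrix (a, ·) (a, ·) := by
  ext b b'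
  simp only [trA, Matrix.sum_apply, Matrix.submatrix_apply]

theorem rank_trA_le_mul_rank {n m : ℕ} (ρ : Matrix (Fin n × Fin m) (Fin n × Fin m) ℂ) :
    (trA ρ).rank ≤ n * ρ.rank :=
  calc (trA ρ).rank
      ≤ ∑ a : Fin n, (ρ.submatrix (a, ·) (a, ·)).rank := by
        rw [trA_eq_sum_submatrix]
        exact Matrix.rank_finsetSum_le _ _
    _ ≤ ∑ _a : Fin n, ρ.rank := Finset.sum_le_sum fun _ _ => ρ.rank_submatrix_le _ _
    _ = n * ρ.rank := by rw [Finset.sum_const, Finset.card_univ, Fintype.card_fin, smul_eq_mul]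

theorem rank_bounds_of_full_rank_margins_general (kA kB : ℕ)
    (ρ : Matrix (Fin kA × Fin kB) (Fin kA × Fin kB) ℂ)
    (hB : (trA ρ).rank = kB) :
    (kB + kA - 1) / kA ≤ ρ.rank ∧ ρ.rank ≤ kA * kB := by
  have hupper : ρ.rank ≤ kA * kB := by
    simpa using ρ.rank_le_card_height
  have hlower : kB ≤ kA * ρ.rank := hB.ge.trans (rank_trA_le_mul_rank ρ)
  refine ⟨?_, hupper⟩
  rcases Nat.eq_zero_or_pos kA with hA0 | hApos
  · simp [hA0]
  · rw [Nat.div_le_iff_le_mul_add_pred hApos]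
    omega

/-- for a bipartite density operator `ρ` on `ℂ^{kA} ⊗ ℂ^{kB}` whose margins
have full ranks `kA ≤ kB`, one has `⌈kB / kA⌉ ≤ rank ρ ≤ kA * kB`. -/
theorem rank_bounds_of_full_rank_margins (kA kB : ℕ) (hk : kA ≤ kB)
    (ρ : Matrix (Fin kA × Fin kB) (Fin kA × Fin kB) ℂ)
    (hpsd : ρ.PosSemidef) (htr : ρ.trace = 1)
    (hA : (trB ρ).rank = kA) (hB : (trA ρ).rank = kB) :
    (kB + kA - 1) / kA ≤ ρ.rank ∧ ρ.rank ≤ kA * kB :=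
  rank_bounds_of_full_rank_margins_general kA kB ρ hB
end

section
/- Let n ≤ m and define operators X, Z_n on C^m by X|i⟩ = |i+1 mod m⟩ and Z_n|i⟩ = ω^i |i⟩ where ω = e^{2πi/n} is a primitive n-th root of unity. Let |ψ_{00}⟩ = (1/√n) ∑_{i=0}^{n−1} |i⟩⊗|i⟩ ∈ C^n ⊗ C^m and |ψ_{ij}⟩ = (I_n ⊗ X^i Z_n^j)|ψ_{00}⟩ for 0 ≤ i ≤ m−1, 0 ≤ j ≤ n−1. Then the mn vectors |ψ_{ij}⟩ form an orthonormal basis of C^n ⊗ C^m. -/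
/-!
Since `n ≤ m`, `ψ_{ij}(a, b) = [b = a + i] · ω^{ja} / √n`: the vector `ψ_{ij}` is supported
on a shifted diagonal. Vectors with different shifts `i ≠ k` have disjoint supports, and for
`i = k` the inner product is the character sum `(1/n) ∑_{a<n} ω^{(l-j)a} = δ_{jl}`. An
orthonormal family is linearly independent, and there are `mn = dim (ℂ^n ⊗ ℂ^m)` vectors, so
they span.
-/

open ComplexOrder

/-- `ω = e^{2πi/n}`, a primitive `n`-th root of unity. -/
noncomputable def omegaC (n : ℕ) : ℂ := Complex.exp (2 * Real.pi * Complex.I / n)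

/-- The cyclic shift operator `X` on `ℂ^m`: `X |j⟩ = |j + 1 mod m⟩`. -/
def shiftX (m : ℕ) [NeZero m] : Matrix (Fin m) (Fin m) ℂ :=
  fun i j => if i = j + 1 then 1 else 0

/-- The generalized clock operator `Z_n` on `ℂ^m`: `Z_n |i⟩ = ω^i |i⟩` with `ω = e^{2πi/n}`. -/
noncomputable def weylZ (n m : ℕ) : Matrix (Fin m) (Fin m) ℂ :=
  Matrix.diagonal fun i : Fin m => omegaC n ^ (i : ℕ)

/-- The maximally entangled state `|ψ₀₀⟩ = (1/√n) ∑_{s<n} |s⟩ ⊗ |s⟩` in `ℂ^n ⊗ ℂ^m`. -/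
noncomputable def psi00 (n m : ℕ) : Fin n × Fin m → ℂ :=
  fun p => if (p.1 : ℕ) = (p.2 : ℕ) then ((Real.sqrt n : ℝ)⁻¹ : ℂ) else 0

/-- Apply an operator `M` on `ℂ^m` to the second tensor factor of `ℂ^n ⊗ ℂ^m`. -/
noncomputable def applyB {n m : ℕ} (M : Matrix (Fin m) (Fin m) ℂ)
    (v : Fin n × Fin m → ℂ) : Fin n × Fin m → ℂ :=
  fun p => ∑ c : Fin m, M p.2 c * v (p.1, c)

/-- `|ψ_{ij}⟩ = (I_n ⊗ X^i Z_n^j) |ψ₀₀⟩`. -/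
noncomputable def psiV (n m : ℕ) [NeZero m] (i : Fin m) (j : Fin n) :
    Fin n × Fin m → ℂ :=
  applyB (shiftX m ^ (i : ℕ) * weylZ n m ^ (j : ℕ)) (psi00 n m)

/-- The rank-one projector `|v⟩⟨v|`. -/
noncomputable def proj {α : Type*} (v : α → ℂ) : Matrix α α ℂ :=
  fun p q => v p * star (v q)

theorem Fin.sum_pow_eq_ite_of_pow_eq_one {K : Type*} [Field K] [DecidableEq K] {x : K} {n : ℕ}
    (hx : x ^ n = 1) :
    ∑ a : Fin n, x ^ (a : ℕ) = if x = 1 then (n : K) else 0 := by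
  rw [Fin.sum_univ_eq_sum_range (x ^ ·)]
  split_ifs with h
  · simp [h]
  · rw [geom_sum_eq h, hx, sub_self, zero_div]

theorem IsPrimitiveRoot.sum_star_pow_mul_pow {ζ : ℂ} {n : ℕ} (hζ : IsPrimitiveRoot ζ n)
    (j l : Fin n) :
    ∑ a : Fin n, (star (ζ ^ (j : ℕ)) * ζ ^ (l : ℕ)) ^ (a : ℕ) =
      if j = l then (n : ℂ) else 0 := by
  have hn : n ≠ 0 := j.pos.ne'
  have hζ0 : ζ ^ (j : ℕ) ≠ 0 := pow_ne_zero _ (hζ.ne_zero hn)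
  have hstar : star (ζ ^ (j : ℕ)) = (ζ ^ (j : ℕ))⁻¹ :=
    (Complex.inv_eq_conj (by rw [norm_pow, hζ.norm'_eq_one hn, one_pow])).symm
  have hpow : ((ζ ^ (j : ℕ))⁻¹ * ζ ^ (l : ℕ)) ^ n = 1 := by
    rw [mul_pow, inv_pow, ← pow_mul, ← pow_mul, mul_comm (j : ℕ), mul_comm (l : ℕ), pow_mul,
      pow_mul, hζ.pow_eq_one, one_pow, one_pow, inv_one, one_mul]
  have hone : (ζ ^ (j : ℕ))⁻¹ * ζ ^ (l : ℕ) = 1 ↔ j = l := by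
    rw [inv_mul_eq_one₀ hζ0, Fin.ext_iff]
    exact ⟨fun h => hζ.pow_inj j.isLt l.isLt h, fun h => h ▸ rfl⟩
  simp only [hstar, Fin.sum_pow_eq_ite_of_pow_eq_one hpow, hone]

theorem span_range_eq_top_of_orthonormal {K ι κ : Type*} [Field K] [Star K] [Fintype ι]
    [Fintype κ] [DecidableEq ι] {v : ι → κ → K}
    (hv : ∀ i j, ∑ p, star (v i p) * v j p = if i = j then 1 else 0)
    (hcard : Fintype.card ι = Fintype.card κ) :
    Submodule.span K (Set.range v) = ⊤ := by
  have hli : LinearIndependent K v := by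
    rw [Fintype.linearIndependent_iff]
    intro g hg i
    calc g i = ∑ j, g j * ∑ p, star (v i p) * v j p := by simp [hv]
      _ = ∑ p, star (v i p) * (∑ j, g j • v j) p := by
        simp only [Finset.sum_apply, Pi.smul_apply, smul_eq_mul, Finset.mul_sum]
        rw [Finset.sum_comm]
        simp only [mul_left_comm]
      _ = 0 := by rw [hg]; simp
  exact hli.span_eq_top_of_card_eq_finrank' (by rw [Module.finrank_fintype_fun_eq_card, hcard])

open Fin.NatCast in
theorem shiftX_pow_apply (m : ℕ) [NeZero m] (k : ℕ) (i j : Fin m) :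
    (shiftX m ^ k) i j = if i = j + (k : Fin m) then 1 else 0 := by
  induction k generalizing i j with
  | zero => simp [Matrix.one_apply]
  | succ k ih =>
    simp only [pow_succ, Matrix.mul_apply, shiftX, mul_ite, mul_one, mul_zero,
      Finset.sum_ite_eq', Finset.mem_univ, if_true]
    rw [ih, Nat.cast_succ, add_assoc, add_comm (1 : Fin m)]

theorem weylZ_pow (n m k : ℕ) :
    weylZ n m ^ k = Matrix.diagonal fun c : Fin m => (omegaC n ^ k) ^ (c : ℕ) := by
  rw [weylZ, Matrix.diagonal_pow]
  congr 1
  funext c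
  rw [Pi.pow_apply, ← pow_mul, ← pow_mul, mul_comm]

theorem psi00_apply {n m : ℕ} (hnm : n ≤ m) (a : Fin n) (b : Fin m) :
    psi00 n m (a, b) = if b = Fin.castLE hnm a then ((Real.sqrt n : ℝ)⁻¹ : ℂ) else 0 := by
  simp only [psi00, Fin.ext_iff, Fin.val_castLE, eq_comm]

theorem psiV_apply {n m : ℕ} [NeZero m] (hnm : n ≤ m) (i : Fin m) (j a : Fin n) (b : Fin m) :
    psiV n m i j (a, b) =
      if b = Fin.castLE hnm a + i then
        (omegaC n ^ (j : ℕ)) ^ (a : ℕ) * ((Real.sqrt n : ℝ)⁻¹ : ℂ)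
      else 0 := by
  simp [psiV, applyB, weylZ_pow, Matrix.mul_diagonal, psi00_apply hnm, shiftX_pow_apply]

theorem isPrimitiveRoot_omegaC {n : ℕ} (hn : n ≠ 0) : IsPrimitiveRoot (omegaC n) n :=
  Complex.isPrimitiveRoot_exp n hn

theorem psiV_inner {n m : ℕ} [NeZero m] (hnm : n ≤ m) (i k : Fin m) (j l : Fin n) :
    ∑ p : Fin n × Fin m, star (psiV n m i j p) * psiV n m k l p =
      if i = k ∧ j = l then 1 else 0 := by
  have hn : n ≠ 0 := j.pos.ne'
  have hnorm :
      star ((Real.sqrt n : ℝ)⁻¹ : ℂ) * ((Real.sqrt n : ℝ)⁻¹ : ℂ) = (n : ℂ)⁻¹ := by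
    rw [star_inv₀, Complex.star_def, Complex.conj_ofReal, ← mul_inv, ← Complex.ofReal_mul,
      Real.mul_self_sqrt n.cast_nonneg, Complex.ofReal_natCast]
  have hrow : ∀ a : Fin n, ∑ b, star (psiV n m i j (a, b)) * psiV n m k l (a, b) =
      if i = k then
        (star (omegaC n ^ (j : ℕ)) * omegaC n ^ (l : ℕ)) ^ (a : ℕ) * (n : ℂ)⁻¹
      else 0 := by
    intro a
    simp only [psiV_apply hnm, apply_ite star, star_zero, ite_mul, zero_mul, mul_ite, mul_zero,
      Finset.sum_ite_eq', Finset.mem_univ, if_true, add_right_inj, eq_comm (a := k)]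
    rw [star_mul', star_pow, mul_mul_mul_comm, hnorm, ← mul_pow]
  rw [Fintype.sum_prod_type, Finset.sum_congr rfl fun a _ => hrow a]
  by_cases hik : i = k
  · rw [Finset.sum_congr rfl fun a _ => if_pos hik, ← Finset.sum_mul,
      (isPrimitiveRoot_omegaC hn).sum_star_pow_mul_pow]
    rw [if_congr (and_iff_right hik) rfl rfl]
    split_ifs
    · exact mul_inv_cancel₀ (Nat.cast_ne_zero.mpr hn)
    · exact zero_mul _
  · simp [hik]

theorem psiV_orthonormal_basis_general (n m : ℕ) [NeZero m] (hnm : n ≤ m) :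
    (∀ (i k : Fin m) (j l : Fin n),
        ∑ p : Fin n × Fin m, star (psiV n m i j p) * psiV n m k l p =
          if i = k ∧ j = l then 1 else 0) ∧
      Submodule.span ℂ (Set.range fun q : Fin m × Fin n => psiV n m q.1 q.2) = ⊤ := by
  refine ⟨psiV_inner hnm, span_range_eq_top_of_orthonormal ?_ ?_⟩
  · rintro ⟨i, j⟩ ⟨k, l⟩
    simpa only [Prod.mk.injEq] using psiV_inner hnm i k j l
  · rw [Fintype.card_prod, Fintype.card_prod, mul_comm]

/-- the `m·n` vectors `|ψ_{ij}⟩` form an orthonormal basis of `ℂ^n ⊗ ℂ^m`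
(with respect to the standard inner product). -/
theorem psiV_orthonormal_basis (n m : ℕ) [NeZero n] [NeZero m] (hnm : n ≤ m) :
    (∀ (i k : Fin m) (j l : Fin n),
        ∑ p : Fin n × Fin m, star (psiV n m i j p) * psiV n m k l p =
          if i = k ∧ j = l then 1 else 0) ∧
      Submodule.span ℂ (Set.range fun q : Fin m × Fin n => psiV n m q.1 q.2) = ⊤ :=
  psiV_orthonormal_basis_general n m hnm
end

section
/- With the setup of the generalized discrete Weyl construction (n ≤ m), the partial trace over the first factor satisfies tr_A(|ψ_{ij}⟩⟨ψ_{ij}|) = (1/n) X^i (∑_{s=0}^{n−1} |s⟩⟨s|) X^{−i}, and in particular it is independent of j. -/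
open ComplexOrder

/-- The projector `∑_{s<n} |s⟩⟨s|` on `ℂ^m`. -/
def Pproj (n m : ℕ) : Matrix (Fin m) (Fin m) ℂ :=
  fun a b => if a = b ∧ (a : ℕ) < n then 1 else 0

/-! `ψ_{ij}` is `ψ₀₀` acted on by the local operator `I ⊗ X^i Z_n^j`, and tracing out the first
factor intertwines local operators: `tr_A ((I ⊗ M) ρ (I ⊗ M)†) = M (tr_A ρ) M†`. For the maximally
entangled `ψ₀₀` one gets `tr_A |ψ₀₀⟩⟨ψ₀₀| = P / n`. The clock `Z_n^j` is a diagonal unitary, so it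
commutes with the diagonal `P` and cancels against its adjoint; the shift `X^i` is a permutation
matrix, so its adjoint is its inverse. -/

open Matrix Finset

lemma trA_proj_applyB {n m : ℕ} (M : Matrix (Fin m) (Fin m) ℂ) (v : Fin n × Fin m → ℂ) :
    trA (proj (applyB M v)) = M * trA (proj v) * Mᴴ := by
  ext b b'
  simp only [trA, proj, applyB, mul_apply, conjTranspose_apply, star_sum, star_mul',
    sum_mul, mul_sum]
  rw [sum_comm]
  refine sum_congr rfl fun c _ => ?_
  rw [sum_comm]
  refine sum_congr rfl fun c' _ => sum_congr rfl fun a _ => ?_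
  ring

lemma Pproj_eq_diagonal (n m : ℕ) :
    Pproj n m = diagonal fun a : Fin m => if (a : ℕ) < n then 1 else 0 := by
  ext a b
  by_cases hab : a = b <;> simp [Pproj, hab]

lemma trA_proj_psi00 (n m : ℕ) : trA (proj (psi00 n m)) = (n : ℂ)⁻¹ • Pproj n m := by
  have hsq : ((Real.sqrt n : ℝ)⁻¹ : ℂ) * ((Real.sqrt n : ℝ)⁻¹ : ℂ) = (n : ℂ)⁻¹ := by
    rw [← mul_inv, ← Complex.ofReal_mul, Real.mul_self_sqrt n.cast_nonneg, Complex.ofReal_natCast]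
  ext b b'
  simp only [trA, proj, psi00, Pproj, Matrix.smul_apply]
  by_cases hb : (b : ℕ) < n
  · rw [Fintype.sum_eq_single ⟨b, hb⟩]
    · by_cases hbb : b = b'
      · subst hbb; simp [hb, hsq]
      · simp [hbb, Fin.val_eq_val]
    · intro a ha
      have hab : (a : ℕ) ≠ b := fun h => ha (Fin.ext h)
      simp [hab]
  · have hab : ∀ a : Fin n, (a : ℕ) ≠ b := fun a h => hb (h ▸ a.isLt)
    simp [hab, hb]

lemma norm_omegaC (n : ℕ) : ‖omegaC n‖ = 1 := by
  simp [omegaC, Complex.norm_exp]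

lemma weylZ_mem_unitary (n m : ℕ) : weylZ n m ∈ unitary (Matrix (Fin m) (Fin m) ℂ) := by
  refine mem_unitaryGroup_iff.mpr ?_
  rw [weylZ, star_eq_conjTranspose, diagonal_conjTranspose, diagonal_mul_diagonal, ← diagonal_one]
  congr 1
  ext a
  rw [Pi.star_apply, Complex.star_def, Complex.mul_conj', norm_pow, norm_omegaC]
  simp

lemma weylZ_pow_mul_Pproj_mul_star (n m j : ℕ) :
    weylZ n m ^ j * Pproj n m * star (weylZ n m ^ j) = Pproj n m := by
  have hcomm : Commute (weylZ n m) (Pproj n m) := by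
    rw [weylZ, Pproj_eq_diagonal]
    exact commute_diagonal _ _
  rw [(hcomm.pow_left j).eq, mul_assoc,
    Unitary.mul_star_self_of_mem (pow_mem (weylZ_mem_unitary n m) j), mul_one]

lemma shiftX_eq_permMatrix (m : ℕ) [NeZero m] :
    shiftX m = Equiv.Perm.permMatrix ℂ (Equiv.subRight (1 : Fin m)) := by
  ext a b
  simp [shiftX, PEquiv.toMatrix_apply, sub_eq_iff_eq_add]

lemma shiftX_mem_unitary (m : ℕ) [NeZero m] : shiftX m ∈ unitary (Matrix (Fin m) (Fin m) ℂ) := by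
  refine mem_unitaryGroup_iff.mpr ?_
  rw [shiftX_eq_permMatrix, star_eq_conjTranspose, conjTranspose_permMatrix, ← permMatrix_mul,
    inv_mul_cancel, permMatrix_one]

theorem trA_proj_psiV_general (n m : ℕ) [NeZero m]
    (i : Fin m) (j : Fin n) :
    trA (proj (psiV n m i j)) =
        ((n : ℂ))⁻¹ • (shiftX m ^ (i : ℕ) * Pproj n m * (shiftX m ^ (i : ℕ))⁻¹) ∧
      ∀ j' : Fin n, trA (proj (psiV n m i j')) = trA (proj (psiV n m i j)) := by
  set X := shiftX m ^ (i : ℕ)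
  have key (j : Fin n) : trA (proj (psiV n m i j)) = (n : ℂ)⁻¹ • (X * Pproj n m * X⁻¹) := by
    set Z := weylZ n m ^ (j : ℕ)
    calc trA (proj (psiV n m i j))
        = (X * Z) * ((n : ℂ)⁻¹ • Pproj n m) * star (X * Z) := by
          rw [psiV, trA_proj_applyB, trA_proj_psi00, star_eq_conjTranspose]
      _ = (n : ℂ)⁻¹ • (X * (Z * Pproj n m * star Z) * star X) := by
          simp only [star_mul, Matrix.mul_smul, Matrix.smul_mul, mul_assoc]
      _ = (n : ℂ)⁻¹ • (X * Pproj n m * X⁻¹) := by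
          rw [weylZ_pow_mul_Pproj_mul_star, inv_eq_left_inv
            (Unitary.star_mul_self_of_mem (pow_mem (shiftX_mem_unitary m) _))]
  exact ⟨key j, fun j' => (key j').trans (key j).symm⟩

/-- `tr_A |ψ_{ij}⟩⟨ψ_{ij}| = (1/n) X^i (∑_{s<n} |s⟩⟨s|) X^{-i}`; in
particular it does not depend on `j`. -/
theorem trA_proj_psiV (n m : ℕ) [NeZero n] [NeZero m] (hnm : n ≤ m)
    (i : Fin m) (j : Fin n) :
    trA (proj (psiV n m i j)) =
        ((n : ℂ))⁻¹ • (shiftX m ^ (i : ℕ) * Pproj n m * (shiftX m ^ (i : ℕ))⁻¹) ∧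
      ∀ j' : Fin n, trA (proj (psiV n m i j')) = trA (proj (psiV n m i j)) :=
  trA_proj_psiV_general n m i j
end

section
/- Let n ≤ m with n dividing m. For every integer k with m/n ≤ k ≤ m, there exists a density operator ρ on C^n ⊗ C^m with rank ρ = k, tr_B ρ = (1/n) I_n, and tr_A ρ = (1/m) I_m. -/
open ComplexOrder

open Finset Matrix Matrix

/-- Number of `t < k` with `t % p = i`. -/
def cntA (p k i : ℕ) : ℕ := ((Finset.range k).filter (fun t => t % p = i)).card

/-- Amplitude `1/√(n·p·c_i)`. -/
noncomputable def ampA (n p k i : ℕ) : ℝ :=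
  (Real.sqrt ((n : ℝ) * ((p : ℝ) * (cntA p k i))))⁻¹

/-- The matrix whose columns are the (scaled) orthogonal maximally entangled states. -/
noncomputable def BmatA (n m p k : ℕ) : Matrix (Fin n × Fin m) (Fin k) ℂ :=
  fun x t =>
    if (x.2 : ℕ) = (x.1 : ℕ) + ((t : ℕ) % p) * n then
      ((ampA n p k ((t : ℕ) % p) : ℝ) : ℂ) * omegaC n ^ (((t : ℕ) / p) * (x.1 : ℕ))
    else 0

lemma cntA_pos (p k i : ℕ) (hi : i < p) (hpk : p ≤ k) : 0 < cntA p k i := by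
  apply Finset.card_pos.mpr
  exact ⟨i, Finset.mem_filter.mpr ⟨Finset.mem_range.mpr (lt_of_lt_of_le hi hpk),
    Nat.mod_eq_of_lt hi⟩⟩

lemma omegaC_ne_zero (n : ℕ) : omegaC n ≠ 0 := Complex.exp_ne_zero _

lemma omegaC_pow_n (n : ℕ) (hn : n ≠ 0) : omegaC n ^ n = 1 :=
  (Complex.isPrimitiveRoot_exp n hn).pow_eq_one

lemma star_omegaC (n : ℕ) : star (omegaC n) = (omegaC n)⁻¹ := by
  rw [omegaC, Complex.star_def, ← Complex.exp_conj, ← Complex.exp_neg]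
  congr 1
  simp only [map_div₀, _root_.map_mul, Complex.conj_I, Complex.conj_ofReal, map_ofNat,
    Complex.conj_natCast]
  ring

lemma omegaC_pow_mul_star (n e : ℕ) : omegaC n ^ e * star (omegaC n ^ e) = 1 := by
  rw [star_pow, star_omegaC, inv_pow, mul_inv_cancel₀ (pow_ne_zero _ (omegaC_ne_zero n))]

lemma ampA_sq (n p k i : ℕ) :
    (ampA n p k i : ℝ) * ampA n p k i = ((n : ℝ) * ((p : ℝ) * cntA p k i))⁻¹ := by
  rw [ampA, ← mul_inv, Real.mul_self_sqrt (by positivity)]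

lemma sum_fin_ite {M : ℕ} {e : ℕ} (he : e < M) (z : ℂ) :
    (∑ b : Fin M, if (b : ℕ) = e then z else 0) = z := by
  rw [Finset.sum_eq_single (⟨e, he⟩ : Fin M)]
  · simp
  · intro b _ hb
    exact if_neg (fun h => hb (Fin.ext h))
  · intro h; exact absurd (Finset.mem_univ _) h

lemma sum_weightsA (p k : ℕ) (hp : 0 < p) (hpk : p ≤ k) :
    ∑ t : Fin k, ((p : ℝ) * cntA p k ((t : ℕ) % p))⁻¹ = 1 := by
  rw [Fin.sum_univ_eq_sum_range (fun t => ((p : ℝ) * cntA p k (t % p))⁻¹) k]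
  rw [Finset.sum_comp (fun i => ((p : ℝ) * cntA p k i)⁻¹) (fun t => t % p)]
  have himg : (Finset.range k).image (fun t => t % p) = Finset.range p := by
    apply Finset.Subset.antisymm
    · intro i hi
      simp only [Finset.mem_image, Finset.mem_range] at *
      obtain ⟨t, _, rfl⟩ := hi
      exact Nat.mod_lt _ hp
    · intro i hi
      simp only [Finset.mem_image, Finset.mem_range] at *
      exact ⟨i, lt_of_lt_of_le hi hpk, Nat.mod_eq_of_lt hi⟩
  rw [himg]
  have hterm : ∀ i ∈ Finset.range p,
      (((Finset.range k).filter (fun t => t % p = i)).card : ℕ) •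
        ((p : ℝ) * cntA p k i)⁻¹ = (p : ℝ)⁻¹ := by
    intro i hi
    rw [Finset.mem_range] at hi
    have hc : 0 < cntA p k i := cntA_pos p k i hi hpk
    have hc' : (cntA p k i : ℝ) ≠ 0 := Nat.cast_ne_zero.mpr hc.ne'
    have hcard : ((Finset.range k).filter (fun t => t % p = i)).card = cntA p k i := rfl
    rw [hcard, nsmul_eq_mul, mul_inv]
    field_simp
  rw [Finset.sum_congr rfl hterm, Finset.sum_const, Finset.card_range, nsmul_eq_mul]
  have hp' : (p : ℝ) ≠ 0 := Nat.cast_ne_zero.mpr hp.ne'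
  field_simp

lemma sum_fiberA (p k i0 : ℕ) (x : ℂ) :
    (∑ t : Fin k, if (t : ℕ) % p = i0 then x else 0) = (cntA p k i0 : ℂ) * x := by
  rw [Fin.sum_univ_eq_sum_range (fun t => if t % p = i0 then x else 0) k,
    ← Finset.sum_filter, Finset.sum_const, nsmul_eq_mul]
  rfl

lemma Bsum_inner (n m p k : ℕ) (hn : 0 < n) (hp : 0 < p) (hm : m = n * p)
    (a : Fin n) (s t : Fin k) (hst : (s : ℕ) % p = (t : ℕ) % p) :
    ∑ b : Fin m, star (BmatA n m p k (a, b) s) * BmatA n m p k (a, b) t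
      = (((ampA n p k ((s : ℕ) % p) : ℝ) : ℂ) * ((ampA n p k ((t : ℕ) % p) : ℝ) : ℂ)) *
        (star (omegaC n ^ ((s : ℕ) / p)) * omegaC n ^ ((t : ℕ) / p)) ^ (a : ℕ) := by
  have h1 : (a : ℕ) < n := a.2
  have h2 : (s : ℕ) % p < p := Nat.mod_lt _ hp
  have he : (a : ℕ) + ((s : ℕ) % p) * n < m := by
    have h3 : ((s : ℕ) % p + 1) * n ≤ p * n := Nat.mul_le_mul_right _ h2
    calc (a : ℕ) + ((s : ℕ) % p) * n < n + ((s : ℕ) % p) * n := by omega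
      _ = ((s : ℕ) % p + 1) * n := by ring
      _ ≤ p * n := h3
      _ = m := by rw [hm, mul_comm]
  have key : ∀ b : Fin m, star (BmatA n m p k (a, b) s) * BmatA n m p k (a, b) t
      = if (b : ℕ) = (a : ℕ) + ((s : ℕ) % p) * n then
          (((ampA n p k ((s : ℕ) % p) : ℝ) : ℂ) * ((ampA n p k ((t : ℕ) % p) : ℝ) : ℂ)) *
          (star (omegaC n ^ ((s : ℕ) / p)) * omegaC n ^ ((t : ℕ) / p)) ^ (a : ℕ)
        else 0 := by
    intro b
    by_cases hb : (b : ℕ) = (a : ℕ) + ((s : ℕ) % p) * n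
    · rw [if_pos hb]
      simp only [BmatA]
      rw [if_pos hb, if_pos (by rw [← hst]; exact hb)]
      simp only [star_mul', star_pow, Complex.star_def, Complex.conj_ofReal, mul_pow, pow_mul]
      ring
    · rw [if_neg hb]
      simp only [BmatA]
      rw [if_neg hb, if_neg (by rw [← hst]; exact hb)]
      simp
  rw [Finset.sum_congr rfl (fun b _ => key b), sum_fin_ite he]



lemma gramA (n m p k : ℕ) (hn : 0 < n) (hp : 0 < p) (hpk : p ≤ k) (hk : k ≤ n * p)
    (hm : m = n * p) :
    (BmatA n m p k)ᴴ * BmatA n m p k =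
      Matrix.diagonal
        (fun t : Fin k => ((((p : ℝ) * cntA p k ((t : ℕ) % p))⁻¹ : ℝ) : ℂ)) := by
  have hn0 : n ≠ 0 := hn.ne'
  ext s t
  rw [Matrix.mul_apply]
  simp only [Matrix.conjTranspose_apply]
  rw [Fintype.sum_prod_type]
  by_cases hst : (s : ℕ) % p = (t : ℕ) % p
  · rw [Finset.sum_congr rfl (fun a _ => Bsum_inner n m p k hn hp hm a s t hst)]
    rw [← Finset.mul_sum]
    by_cases hseq : s = t
    · subst hseq
      have hωs : star (omegaC n ^ ((s : ℕ) / p)) * omegaC n ^ ((s : ℕ) / p) = 1 := by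
        rw [mul_comm]; exact omegaC_pow_mul_star n _
      rw [hωs]
      simp only [one_pow, Finset.sum_const, Finset.card_univ, Fintype.card_fin,
        nsmul_eq_mul, mul_one]
      rw [Matrix.diagonal_apply_eq, ← Complex.ofReal_mul, ampA_sq n p k]
      have hab : (((n : ℝ) * ((p : ℝ) * cntA p k ((s : ℕ) % p)))⁻¹ : ℝ) * (n : ℝ)
          = ((p : ℝ) * cntA p k ((s : ℕ) % p))⁻¹ := by
        have hc : 0 < cntA p k ((s : ℕ) % p) := cntA_pos p k _ (Nat.mod_lt _ hp) hpk
        have hc' : (cntA p k ((s : ℕ) % p) : ℝ) ≠ 0 := Nat.cast_ne_zero.mpr hc.ne'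
        have hn' : (n : ℝ) ≠ 0 := Nat.cast_ne_zero.mpr hn0
        have hp' : (p : ℝ) ≠ 0 := Nat.cast_ne_zero.mpr hp.ne'
        field_simp
      rw [show ((n : ℕ) : ℂ) = (((n : ℕ) : ℝ) : ℂ) by push_cast; ring,
        ← Complex.ofReal_mul, hab]
    · have hjs : (s : ℕ) / p < n := Nat.div_lt_of_lt_mul (by
        rw [mul_comm]; exact lt_of_lt_of_le s.2 hk)
      have hjt : (t : ℕ) / p < n := Nat.div_lt_of_lt_mul (by
        rw [mul_comm]; exact lt_of_lt_of_le t.2 hk)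
      have hne : (s : ℕ) / p ≠ (t : ℕ) / p := by
        intro h
        apply hseq
        apply Fin.ext
        calc (s : ℕ) = p * ((s : ℕ) / p) + (s : ℕ) % p := (Nat.div_add_mod _ _).symm
          _ = p * ((t : ℕ) / p) + (t : ℕ) % p := by rw [h, hst]
          _ = (t : ℕ) := Nat.div_add_mod _ _
      have hωne : omegaC n ^ ((s : ℕ) / p) ≠ omegaC n ^ ((t : ℕ) / p) := by
        intro h
        exact hne ((Complex.isPrimitiveRoot_exp n hn0).pow_inj hjs hjt h)
      set ζ := star (omegaC n ^ ((s : ℕ) / p)) * omegaC n ^ ((t : ℕ) / p) with hζdef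
      have hpow : ∀ e : ℕ, (omegaC n ^ e) ^ n = 1 := by
        intro e
        rw [← pow_mul, mul_comm, pow_mul, omegaC_pow_n n hn0, one_pow]
      have hζn : ζ ^ n = 1 := by
        rw [hζdef, mul_pow, ← star_pow, hpow, hpow, star_one, one_mul]
      have hζ1 : ζ ≠ 1 := by
        intro h
        apply hωne
        have hwz : star (omegaC n ^ ((s : ℕ) / p)) ≠ 0 :=
          star_ne_zero.mpr (pow_ne_zero _ (omegaC_ne_zero n))
        have hsz : star (omegaC n ^ ((s : ℕ) / p)) * omegaC n ^ ((s : ℕ) / p) = 1 := by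
          rw [mul_comm]; exact omegaC_pow_mul_star n _
        exact (mul_left_cancel₀ hwz (h.trans hsz.symm)).symm
      have hsum : ∑ a : Fin n, ζ ^ (a : ℕ) = 0 := by
        rw [Fin.sum_univ_eq_sum_range (fun a => ζ ^ a) n, geom_sum_eq hζ1, hζn]
        simp
      rw [hsum, mul_zero, Matrix.diagonal_apply_ne _ hseq]
  · have hseq : s ≠ t := fun h => hst (by rw [h])
    rw [Matrix.diagonal_apply_ne _ hseq]
    apply Finset.sum_eq_zero
    intro a _
    apply Finset.sum_eq_zero
    intro b _
    simp only [BmatA]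
    by_cases h1 : (b : ℕ) = (a : ℕ) + ((s : ℕ) % p) * n
    · rw [if_neg (fun h2 => hst (Nat.eq_of_mul_eq_mul_right hn
        (Nat.add_left_cancel (h1.symm.trans h2))))]
      simp
    · rw [if_neg h1]
      simp



lemma trB_BA (n m p k : ℕ) (hn : 0 < n) (hp : 0 < p) (hpk : p ≤ k) (hk : k ≤ n * p)
    (hm : m = n * p) :
    trB (BmatA n m p k * (BmatA n m p k)ᴴ)
      = ((n : ℂ))⁻¹ • (1 : Matrix (Fin n) (Fin n) ℂ) := by
  have hn0 : n ≠ 0 := hn.ne'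
  ext a a'
  simp only [trB, Matrix.mul_apply, Matrix.conjTranspose_apply, Matrix.smul_apply,
    Matrix.one_apply, smul_eq_mul]
  rw [Finset.sum_comm]
  by_cases haa : a = a'
  · subst haa
    have key : ∀ t : Fin k,
        ∑ b : Fin m, BmatA n m p k (a, b) t * star (BmatA n m p k (a, b) t)
          = ((((n : ℝ) * ((p : ℝ) * cntA p k ((t : ℕ) % p)))⁻¹ : ℝ) : ℂ) := by
      intro t
      have h1 : (a : ℕ) < n := a.2
      have h2 : (t : ℕ) % p < p := Nat.mod_lt _ hp
      have he : (a : ℕ) + ((t : ℕ) % p) * n < m := by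
        have h3 : ((t : ℕ) % p + 1) * n ≤ p * n := Nat.mul_le_mul_right _ h2
        calc (a : ℕ) + ((t : ℕ) % p) * n < n + ((t : ℕ) % p) * n := by omega
          _ = ((t : ℕ) % p + 1) * n := by ring
          _ ≤ p * n := h3
          _ = m := by rw [hm, mul_comm]
      have keyb : ∀ b : Fin m, BmatA n m p k (a, b) t * star (BmatA n m p k (a, b) t)
          = if (b : ℕ) = (a : ℕ) + ((t : ℕ) % p) * n then
              ((((n : ℝ) * ((p : ℝ) * cntA p k ((t : ℕ) % p)))⁻¹ : ℝ) : ℂ)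
            else 0 := by
        intro b
        by_cases hb : (b : ℕ) = (a : ℕ) + ((t : ℕ) % p) * n
        · rw [if_pos hb]
          simp only [BmatA]
          rw [if_pos hb]
          have hcancel := omegaC_pow_mul_star n (((t : ℕ) / p) * (a : ℕ))
          calc ((ampA n p k ((t : ℕ) % p) : ℝ) : ℂ) * omegaC n ^ (((t : ℕ) / p) * (a : ℕ)) *
                star (((ampA n p k ((t : ℕ) % p) : ℝ) : ℂ) *
                  omegaC n ^ (((t : ℕ) / p) * (a : ℕ)))
              = ((ampA n p k ((t : ℕ) % p) * ampA n p k ((t : ℕ) % p) : ℝ) : ℂ) *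
                (omegaC n ^ (((t : ℕ) / p) * (a : ℕ)) *
                  star (omegaC n ^ (((t : ℕ) / p) * (a : ℕ)))) := by
                simp only [star_mul', Complex.star_def, Complex.conj_ofReal]
                push_cast
                ring
            _ = _ := by rw [hcancel, mul_one, ampA_sq]
        · rw [if_neg hb]
          simp only [BmatA]
          rw [if_neg hb]
          simp
      rw [Finset.sum_congr rfl (fun b _ => keyb b), sum_fin_ite he]
    rw [Finset.sum_congr rfl (fun t _ => key t), if_pos rfl, mul_one]
    rw [← Complex.ofReal_sum]
    have hsum : ∑ t : Fin k, ((n : ℝ) * ((p : ℝ) * cntA p k ((t : ℕ) % p)))⁻¹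
        = (n : ℝ)⁻¹ := by
      have : ∀ t : Fin k, ((n : ℝ) * ((p : ℝ) * cntA p k ((t : ℕ) % p)))⁻¹
          = (n : ℝ)⁻¹ * ((p : ℝ) * cntA p k ((t : ℕ) % p))⁻¹ := fun t => by
        rw [mul_inv]
      rw [Finset.sum_congr rfl (fun t _ => this t), ← Finset.mul_sum,
        sum_weightsA p k hp hpk, mul_one]
    rw [hsum]
    simp
  · rw [if_neg haa, mul_zero]
    apply Finset.sum_eq_zero
    intro t _
    apply Finset.sum_eq_zero
    intro b _
    simp only [BmatA]
    by_cases h1 : (b : ℕ) = (a : ℕ) + ((t : ℕ) % p) * n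
    · rw [if_neg (fun h2 => haa (Fin.ext (Nat.add_right_cancel
        ((h1.symm.trans h2) : (a : ℕ) + ((t : ℕ) % p) * n = (a' : ℕ) + ((t : ℕ) % p) * n))))]
      simp
    · rw [if_neg h1]
      simp

lemma trA_BA (n m p k : ℕ) (hn : 0 < n) (hp : 0 < p) (hpk : p ≤ k) (hk : k ≤ n * p)
    (hm : m = n * p) :
    trA (BmatA n m p k * (BmatA n m p k)ᴴ)
      = ((m : ℂ))⁻¹ • (1 : Matrix (Fin m) (Fin m) ℂ) := by
  have hn0 : n ≠ 0 := hn.ne'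
  ext b b'
  simp only [trA, Matrix.mul_apply, Matrix.conjTranspose_apply, Matrix.smul_apply,
    Matrix.one_apply, smul_eq_mul]
  by_cases hbb : b = b'
  · subst hbb
    rw [Finset.sum_comm, if_pos rfl, mul_one]
    have hbn : (b : ℕ) / n < p := Nat.div_lt_of_lt_mul (by rw [← hm]; exact b.2)
    have hc : 0 < cntA p k ((b : ℕ) / n) := cntA_pos p k _ hbn hpk
    have key : ∀ t : Fin k,
        ∑ a : Fin n, BmatA n m p k (a, b) t * star (BmatA n m p k (a, b) t)
          = if (t : ℕ) % p = (b : ℕ) / n then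
              ((((n : ℝ) * ((p : ℝ) * cntA p k ((b : ℕ) / n)))⁻¹ : ℝ) : ℂ)
            else 0 := by
      intro t
      by_cases hi : (t : ℕ) % p = (b : ℕ) / n
      · rw [if_pos hi]
        have ha0 : (b : ℕ) % n < n := Nat.mod_lt _ hn
        have hcond : (b : ℕ) = (b : ℕ) % n + ((t : ℕ) % p) * n := by
          rw [hi]
          exact (Nat.mod_add_div' (b : ℕ) n).symm
        rw [Finset.sum_eq_single (⟨(b : ℕ) % n, ha0⟩ : Fin n)]
        · simp only [BmatA]
          rw [if_pos hcond]
          have hcancel := omegaC_pow_mul_star n (((t : ℕ) / p) * ((b : ℕ) % n))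
          calc ((ampA n p k ((t : ℕ) % p) : ℝ) : ℂ) *
                omegaC n ^ (((t : ℕ) / p) * ((b : ℕ) % n)) *
                star (((ampA n p k ((t : ℕ) % p) : ℝ) : ℂ) *
                  omegaC n ^ (((t : ℕ) / p) * ((b : ℕ) % n)))
              = ((ampA n p k ((t : ℕ) % p) * ampA n p k ((t : ℕ) % p) : ℝ) : ℂ) *
                (omegaC n ^ (((t : ℕ) / p) * ((b : ℕ) % n)) *
                  star (omegaC n ^ (((t : ℕ) / p) * ((b : ℕ) % n)))) := by
                simp only [star_mul', Complex.star_def, Complex.conj_ofReal]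
                push_cast
                ring
            _ = _ := by rw [hcancel, mul_one, ampA_sq, hi]
        · intro a _ hane
          simp only [BmatA]
          rw [if_neg]
          · simp
          · intro hcontra
            apply hane
            apply Fin.ext
            exact Nat.add_right_cancel (hcontra.symm.trans hcond)
        · intro h
          exact absurd (Finset.mem_univ _) h
      · rw [if_neg hi]
        apply Finset.sum_eq_zero
        intro a _
        simp only [BmatA]
        rw [if_neg]
        · simp
        · intro hcontra
          apply hi
          rw [hcontra, Nat.add_mul_div_right _ _ hn, Nat.div_eq_of_lt a.2, zero_add]
    rw [Finset.sum_congr rfl (fun t _ => key t), sum_fiberA]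
    have hc' : (cntA p k ((b : ℕ) / n) : ℝ) ≠ 0 := Nat.cast_ne_zero.mpr hc.ne'
    have hn' : (n : ℝ) ≠ 0 := Nat.cast_ne_zero.mpr hn0
    have hp' : (p : ℝ) ≠ 0 := Nat.cast_ne_zero.mpr hp.ne'
    have hval : (cntA p k ((b : ℕ) / n) : ℝ) *
        ((n : ℝ) * ((p : ℝ) * cntA p k ((b : ℕ) / n)))⁻¹ = ((n : ℝ) * (p : ℝ))⁻¹ := by
      field_simp
    calc (cntA p k ((b : ℕ) / n) : ℂ) *
          ((((n : ℝ) * ((p : ℝ) * cntA p k ((b : ℕ) / n)))⁻¹ : ℝ) : ℂ)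
        = (((cntA p k ((b : ℕ) / n) : ℝ) *
            ((n : ℝ) * ((p : ℝ) * cntA p k ((b : ℕ) / n)))⁻¹ : ℝ) : ℂ) := by
          push_cast; ring
      _ = ((((n : ℝ) * (p : ℝ))⁻¹ : ℝ) : ℂ) := by rw [hval]
      _ = ((m : ℂ))⁻¹ := by rw [hm]; push_cast; ring
  · rw [if_neg hbb, mul_zero]
    apply Finset.sum_eq_zero
    intro a _
    apply Finset.sum_eq_zero
    intro t _
    simp only [BmatA]
    by_cases h2 : (b' : ℕ) = (a : ℕ) + ((t : ℕ) % p) * n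
    · by_cases h1 : (b : ℕ) = (a : ℕ) + ((t : ℕ) % p) * n
      · exact absurd (Fin.ext (h1.trans h2.symm)) hbb
      · rw [if_neg h1]
        simp
    · rw [if_neg h2]
      simp



/-- for `n ≤ m` with `n ∣ m` and every `m/n ≤ k ≤ m` there is a density
operator on `ℂ^n ⊗ ℂ^m` of rank `k` with margins `(1/n) I_n` and `(1/m) I_m`. -/
theorem exists_density_rank_between_p_and_m (n m : ℕ) [NeZero n] [NeZero m]
    (hnm : n ≤ m) (hdvd : n ∣ m) (k : ℕ) (hk₁ : m / n ≤ k) (hk₂ : k ≤ m) :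
    ∃ ρ : Matrix (Fin n × Fin m) (Fin n × Fin m) ℂ,
      ρ.PosSemidef ∧ ρ.trace = 1 ∧ ρ.rank = k ∧
      trB ρ = ((n : ℂ))⁻¹ • (1 : Matrix (Fin n) (Fin n) ℂ) ∧
      trA ρ = ((m : ℂ))⁻¹ • (1 : Matrix (Fin m) (Fin m) ℂ) := by
  classical
  have hn : 0 < n := Nat.pos_of_ne_zero (NeZero.ne n)
  have hp : 0 < m / n := Nat.div_pos hnm hn
  have hm : m = n * (m / n) := (Nat.mul_div_cancel' hdvd).symm
  have hk' : k ≤ n * (m / n) := le_of_le_of_eq hk₂ hm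
  refine ⟨BmatA n m (m / n) k * (BmatA n m (m / n) k)ᴴ,
    Matrix.posSemidef_self_mul_conjTranspose _, ?_, ?_,
    trB_BA n m (m / n) k hn hp hk₁ hk' hm,
    trA_BA n m (m / n) k hn hp hk₁ hk' hm⟩
  · rw [Matrix.trace_mul_comm, gramA n m (m / n) k hn hp hk₁ hk' hm, Matrix.trace_diagonal]
    rw [← Complex.ofReal_sum, sum_weightsA (m / n) k hp hk₁]
    simp
  · rw [Matrix.rank_self_mul_conjTranspose, ← Matrix.rank_conjTranspose_mul_self,
      gramA n m (m / n) k hn hp hk₁ hk' hm, Matrix.rank_diagonal]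
    have hall : ∀ t : Fin k,
        (((((m / n : ℕ) : ℝ) * cntA (m / n) k ((t : ℕ) % (m / n)))⁻¹ : ℝ) : ℂ) ≠ 0 := by
      intro t
      have hc : 0 < cntA (m / n) k ((t : ℕ) % (m / n)) :=
        cntA_pos _ _ _ (Nat.mod_lt _ hp) hk₁
      have hpos : (0 : ℝ) < ((m / n : ℕ) : ℝ) * cntA (m / n) k ((t : ℕ) % (m / n)) :=
        mul_pos (by exact_mod_cast hp) (by exact_mod_cast hc)
      simp only [ne_eq, Complex.ofReal_eq_zero, inv_eq_zero]
      exact hpos.ne'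
    exact (Fintype.card_congr (Equiv.subtypeUnivEquiv hall)).trans (Fintype.card_fin k)
end

section
/- Littlewood–Richardson coefficients have the semigroup property: if c^ν_{λ,μ} > 0 then c^{ℓν}_{ℓλ,ℓμ} > 0 for every positive integer ℓ, where ℓλ multiplies every part of λ by ℓ. -/
/-- A partition, represented as a weakly decreasing function `ℕ → ℕ` that is
eventually zero. -/
def IsPartitionFn (f : ℕ → ℕ) : Prop :=
  (∀ i j : ℕ, i ≤ j → f j ≤ f i) ∧ ∃ N : ℕ, ∀ i : ℕ, N ≤ i → f i = 0

/-- The size (number of cells of the Young diagram) of a partition `f`. -/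
noncomputable def psize (f : ℕ → ℕ) : ℕ :=
  Nat.card {c : ℕ × ℕ // c.2 < f c.1}

/-- Membership of a cell `c = (row, col)` in the skew diagram `nu / lam`. -/
def inSkew (lam nu : ℕ → ℕ) (c : ℕ × ℕ) : Prop :=
  lam c.1 ≤ c.2 ∧ c.2 < nu c.1

/-- `T` is a Littlewood–Richardson skew tableau of shape `nu / lam` and weight `mu`:
a filling of the skew diagram with positive entries (and `0` outside), weakly
increasing along rows, strictly increasing down columns, with `mu r` entries equal to
`r + 1`, whose reverse reading word (right-to-left along rows, top to bottom) is a
lattice (ballot) word. -/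
def IsLRFilling (lam mu nu : ℕ → ℕ) (T : ℕ × ℕ → ℕ) : Prop :=
  (∀ c : ℕ × ℕ, ¬ inSkew lam nu c → T c = 0) ∧
  (∀ c : ℕ × ℕ, inSkew lam nu c → 1 ≤ T c) ∧
  (∀ i j j' : ℕ, j ≤ j' → inSkew lam nu (i, j) → inSkew lam nu (i, j') →
    T (i, j) ≤ T (i, j')) ∧
  (∀ i i' j : ℕ, i < i' → inSkew lam nu (i, j) → inSkew lam nu (i', j) →
    T (i, j) < T (i', j)) ∧
  (∀ r : ℕ, Nat.card {c : ℕ × ℕ // inSkew lam nu c ∧ T c = r + 1} = mu r) ∧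
  (∀ (d : ℕ × ℕ) (r : ℕ),
    Nat.card {c : ℕ × ℕ // inSkew lam nu c ∧
        (c.1 < d.1 ∨ (c.1 = d.1 ∧ d.2 ≤ c.2)) ∧ T c = r + 2} ≤
      Nat.card {c : ℕ × ℕ // inSkew lam nu c ∧
        (c.1 < d.1 ∨ (c.1 = d.1 ∧ d.2 ≤ c.2)) ∧ T c = r + 1})

/-- The Littlewood–Richardson coefficient `c^ν_{λ,μ}`, via the Littlewood–Richardson
rule: the number of LR skew tableaux of shape `ν / λ` and weight `μ`. -/
noncomputable def LRcoeff (lam mu nu : ℕ → ℕ) : ℕ :=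
  Nat.card {T : ℕ × ℕ → ℕ // IsLRFilling lam mu nu T}

/-!
Stretching every column of an LR tableau of shape `ν / λ` and weight `μ` into `ℓ` equal
columns gives an LR tableau of shape `ℓν / ℓλ` and weight `ℓμ`: rows stay weakly increasing,
columns strictly increasing, and every entry occurs `ℓ` times as often. For the lattice-word
condition, write the position of a cell as `ℓ k + t` with `t < ℓ`: the prefix of the stretched
reading word ending there contains each letter `t B + (ℓ - t) A` times, where `A` and `B` are the
counts in the prefixes of the original word ending at columns `k` and `k + 1` of the same row.
Both prefixes satisfy the lattice inequality, hence so does this combination.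
-/

open Finset

theorem card_stretch_eq_sum (l : ℕ) [NeZero l] (P : ℕ → ℕ × ℕ → Prop)
    (hP : ∀ s, {c | P s c}.Finite) :
    Nat.card {c : ℕ × ℕ // P (c.2 % l) (c.1, c.2 / l)} =
      ∑ s ∈ range l, Nat.card {c // P s c} := by
  let e : ℕ × ℕ ≃ Fin l × (ℕ × ℕ) :=
    ((Equiv.prodCongr (Equiv.refl ℕ) (Nat.divModEquiv l)).trans
      (Equiv.prodAssoc ℕ ℕ (Fin l)).symm).trans (Equiv.prodComm _ _)
  have (s : Fin l) : Finite {c // P s c} := (hP s).to_subtype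
  rw [Nat.card_congr ((e.subtypeEquiv fun c => by simp [e]).trans
    (Equiv.subtypeProdEquivSigmaSubtype fun (s : Fin l) c => P s c)), Nat.card_sigma,
    Fin.sum_univ_eq_sum_range (fun s => Nat.card {c // P s c})]

theorem card_stretch_eq_mul (l : ℕ) [NeZero l] (P : ℕ × ℕ → Prop) (hP : {c | P c}.Finite) :
    Nat.card {c : ℕ × ℕ // P (c.1, c.2 / l)} = l * Nat.card {c // P c} := by
  simpa using card_stretch_eq_sum l (fun _ => P) fun _ => hP

theorem Finset.sum_range_ite_lt {M : Type*} [AddCommMonoid M] {t l : ℕ} (htl : t ≤ l) (a b : M) :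
    ∑ s ∈ range l, (if s < t then a else b) = t • a + (l - t) • b := by
  rw [← sum_range_add_sum_Ico _ htl, sum_congr rfl fun s hs => if_pos (mem_range.mp hs),
    sum_congr rfl fun s hs => if_neg (mem_Ico.mp hs).1.not_gt]
  simp

theorem Nat.le_iff_div_add_ite_le {l : ℕ} [NeZero l] (q j : ℕ) :
    q ≤ j ↔ q / l + (if j % l < q % l then 1 else 0) ≤ j / l := by
  have hq := Nat.div_add_mod q l
  have hj := Nat.div_add_mod j l
  have hql := Nat.mod_lt q (Nat.pos_of_neZero l)
  have hjl := Nat.mod_lt j (Nat.pos_of_neZero l)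
  generalize q / l = a, q % l = b, j / l = x, j % l = y at *
  subst hq hj
  split_ifs with h
  · constructor
    · intro h'
      by_contra! h''
      nlinarith [Nat.mul_le_mul_left l (Nat.le_of_lt_succ h'')]
    · intro h'
      nlinarith [Nat.mul_le_mul_left l h']
  · constructor
    · intro h'
      by_contra! h''
      nlinarith [Nat.mul_le_mul_left l (Nat.succ_le_of_lt h'')]
    · intro h'
      nlinarith [Nat.mul_le_mul_left l h']

namespace IsPartitionFn

theorem const_mul {f : ℕ → ℕ} (hf : IsPartitionFn f) (l : ℕ) : IsPartitionFn fun i => l * f i := by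
  obtain ⟨hmono, N, hN⟩ := hf
  exact ⟨fun i j hij => Nat.mul_le_mul_left l (hmono i j hij), N, fun i hi => by simp [hN i hi]⟩

theorem finite_inSkew {nu : ℕ → ℕ} (hnu : IsPartitionFn nu) (lam : ℕ → ℕ) :
    {c | inSkew lam nu c}.Finite := by
  obtain ⟨hmono, N, hN⟩ := hnu
  refine ((Set.finite_Iio N).prod (Set.finite_Iio (nu 0))).subset fun c ⟨_, hc⟩ => ?_
  refine ⟨Set.mem_Iio.mpr ?_, hc.trans_le (hmono 0 c.1 (Nat.zero_le _))⟩
  by_contra! hcN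
  simp [hN c.1 hcN] at hc

end IsPartitionFn

theorem inSkew_const_mul_iff {lam nu : ℕ → ℕ} {l : ℕ} [NeZero l] (c : ℕ × ℕ) :
    inSkew (fun i => l * lam i) (fun i => l * nu i) c ↔ inSkew lam nu (c.1, c.2 / l) := by
  have hl := Nat.pos_of_neZero l
  simp only [inSkew, Nat.le_div_iff_mul_le hl, Nat.div_lt_iff_lt_mul hl, mul_comm l]

/-- Cells read no later than `d` in the reverse reading word. -/
def ReadUpTo (d c : ℕ × ℕ) : Prop :=
  c.1 < d.1 ∨ (c.1 = d.1 ∧ d.2 ≤ c.2)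

/-- The lattice-word condition of `IsLRFilling` reads
`readCount lam nu T d (r + 2) ≤ readCount lam nu T d (r + 1)`. -/
noncomputable def readCount (lam nu : ℕ → ℕ) (T : ℕ × ℕ → ℕ) (d : ℕ × ℕ) (v : ℕ) : ℕ :=
  Nat.card {c : ℕ × ℕ // inSkew lam nu c ∧ ReadUpTo d c ∧ T c = v}

def stretchCols (l : ℕ) (T : ℕ × ℕ → ℕ) : ℕ × ℕ → ℕ :=
  fun c => T (c.1, c.2 / l)

theorem readUpTo_iff {l : ℕ} [NeZero l] (p q : ℕ) (c : ℕ × ℕ) :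
    ReadUpTo (p, q) c ↔
      ReadUpTo (p, q / l + if c.2 % l < q % l then 1 else 0) (c.1, c.2 / l) := by
  simp only [ReadUpTo, ← Nat.le_iff_div_add_ite_le]

theorem readCount_stretchCols {lam nu : ℕ → ℕ} (hnu : IsPartitionFn nu) (l : ℕ) [NeZero l]
    (T : ℕ × ℕ → ℕ) (p q v : ℕ) :
    readCount (fun i => l * lam i) (fun i => l * nu i) (stretchCols l T) (p, q) v =
      q % l * readCount lam nu T (p, q / l + 1) v +
        (l - q % l) * readCount lam nu T (p, q / l) v := by
  let P (s : ℕ) (c : ℕ × ℕ) : Prop :=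
    inSkew lam nu c ∧ ReadUpTo (p, q / l + if s < q % l then 1 else 0) c ∧ T c = v
  have hP (s : ℕ) : {c | P s c}.Finite :=
    (hnu.finite_inSkew lam).subset fun _ hc => hc.1
  have hcount (s : ℕ) : Nat.card {c // P s c} =
      if s < q % l then readCount lam nu T (p, q / l + 1) v
      else readCount lam nu T (p, q / l) v := by
    split_ifs with hs <;> simp only [P, hs, if_true, if_false, add_zero] <;> rfl
  calc readCount (fun i => l * lam i) (fun i => l * nu i) (stretchCols l T) (p, q) v
      = Nat.card {c : ℕ × ℕ // P (c.2 % l) (c.1, c.2 / l)} :=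
        Nat.card_congr <| Equiv.subtypeEquivRight fun c => by
          rw [inSkew_const_mul_iff, readUpTo_iff (l := l) p q c]; rfl
    _ = _ := by
        rw [card_stretch_eq_sum l P hP, sum_congr rfl fun s _ => hcount s,
          sum_range_ite_lt (Nat.mod_lt q (Nat.pos_of_neZero l)).le, smul_eq_mul, smul_eq_mul]

namespace IsLRFilling

variable {lam mu nu : ℕ → ℕ} {T : ℕ × ℕ → ℕ}

theorem stretchCols (hnu : IsPartitionFn nu) (l : ℕ) [NeZero l] (hT : IsLRFilling lam mu nu T) :
    IsLRFilling (fun i => l * lam i) (fun i => l * mu i) (fun i => l * nu i)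
      (stretchCols l T) := by
  obtain ⟨hzero, hpos, hrow, hcol, hweight, hlattice⟩ := hT
  refine ⟨fun c hc => hzero _ (mt (inSkew_const_mul_iff c).mpr hc),
    fun c hc => hpos _ ((inSkew_const_mul_iff c).mp hc),
    fun i j j' hj h h' => hrow i _ _ (Nat.div_le_div_right hj)
      ((inSkew_const_mul_iff _).mp h) ((inSkew_const_mul_iff _).mp h'),
    fun i i' j hi h h' => hcol i i' _ hi
      ((inSkew_const_mul_iff _).mp h) ((inSkew_const_mul_iff _).mp h'),
    fun r => ?_, fun ⟨p, q⟩ r => ?_⟩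
  · show _ = l * mu r
    rw [← hweight r, ← card_stretch_eq_mul l _ ((hnu.finite_inSkew lam).subset fun _ hc => hc.1)]
    exact Nat.card_congr <| Equiv.subtypeEquivRight fun c => by rw [inSkew_const_mul_iff]; rfl
  · change readCount _ _ _ (p, q) (r + 2) ≤ readCount _ _ _ (p, q) (r + 1)
    rw [readCount_stretchCols hnu, readCount_stretchCols hnu]
    gcongr
    exacts [hlattice (p, q / l + 1) r, hlattice (p, q / l) r]

theorem apply_le (hnu : IsPartitionFn nu) {N : ℕ} (hN : ∀ i, N ≤ i → mu i = 0)
    (hT : IsLRFilling lam mu nu T) (c : ℕ × ℕ) : T c ≤ N := by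
  obtain ⟨hzero, hpos, -, -, hweight, -⟩ := hT
  by_cases hc : inSkew lam nu c
  · have : Finite {c' // inSkew lam nu c' ∧ T c' = T c - 1 + 1} :=
      ((hnu.finite_inSkew lam).subset fun _ hc' => hc'.1).to_subtype
    have : Nonempty {c' // inSkew lam nu c' ∧ T c' = T c - 1 + 1} :=
      ⟨⟨c, hc, by have := hpos c hc; omega⟩⟩
    have hcard : 0 < mu (T c - 1) := hweight (T c - 1) ▸ Nat.card_pos
    by_contra! hlt
    exact hcard.ne' (hN _ (by omega))
  · simp [hzero c hc]

end IsLRFilling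

/-- Needed because `LRcoeff` is a `Nat.card`, which vanishes on infinite types. -/
theorem finite_isLRFilling {lam mu nu : ℕ → ℕ} (hmu : IsPartitionFn mu) (hnu : IsPartitionFn nu) :
    Finite {T : ℕ × ℕ → ℕ // IsLRFilling lam mu nu T} := by
  obtain ⟨N, hN⟩ := hmu.2
  let S := {c | inSkew lam nu c}
  have : Finite S := (hnu.finite_inSkew lam).to_subtype
  refine Finite.of_injective (β := S → Fin (N + 1))
    (fun T c => ⟨T.1 c, Nat.lt_succ_of_le (T.2.apply_le hnu hN c)⟩) fun T U hTU => ?_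
  ext c
  by_cases hc : c ∈ S
  · exact congrArg Fin.val (congrFun hTU ⟨c, hc⟩)
  · rw [T.2.1 c hc, U.2.1 c hc]

theorem LR_semigroup_general (lam mu nu : ℕ → ℕ)
    (hmu : IsPartitionFn mu) (hnu : IsPartitionFn nu)
    (h : 0 < LRcoeff lam mu nu) (ℓ : ℕ) (hℓ : 0 < ℓ) :
    0 < LRcoeff (fun i => ℓ * lam i) (fun i => ℓ * mu i) (fun i => ℓ * nu i) := by
  have : NeZero ℓ := ⟨hℓ.ne'⟩
  obtain ⟨⟨T, hT⟩⟩ := (Nat.card_pos_iff.mp h).1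
  have := finite_isLRFilling (lam := fun i => ℓ * lam i) (hmu.const_mul ℓ) (hnu.const_mul ℓ)
  have : Nonempty {U // IsLRFilling (fun i => ℓ * lam i) (fun i => ℓ * mu i)
      (fun i => ℓ * nu i) U} := ⟨⟨_, hT.stretchCols hnu ℓ⟩⟩
  exact Nat.card_pos

/-- semigroup property of Littlewood–Richardson coefficients:
if `c^ν_{λ,μ} > 0` then `c^{ℓν}_{ℓλ,ℓμ} > 0` for every `ℓ > 0`. -/
theorem LR_semigroup (lam mu nu : ℕ → ℕ)
    (hlam : IsPartitionFn lam) (hmu : IsPartitionFn mu) (hnu : IsPartitionFn nu)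
    (hsize : psize nu = psize lam + psize mu)
    (h : 0 < LRcoeff lam mu nu) (ℓ : ℕ) (hℓ : 0 < ℓ) :
    0 < LRcoeff (fun i => ℓ * lam i) (fun i => ℓ * mu i) (fun i => ℓ * nu i) :=
  LR_semigroup_general lam mu nu hmu hnu h ℓ hℓ
end

section
/- Let m = 2k+1 be odd with k ≥ 1. The partition of strip type derived from the pair (λ, μ) with λ = (m, m) and μ = (2^m) (m rows of 2) equals ν = (4^k, 1, 1). -/
/-- One pass of the strip-type construction for a pair of rectangular partitions,
represented as pairs `(a, r)` (r rows of length a) and `(b, s)`.  At each step the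
next term of the derived partition is `|λ ∩ μ| = min a b * min r s`, and the pair is
replaced by the complements `λ \ (λ∩μ)` and `μ \ (λ∩μ)` (again rectangles).  The
first argument is a fuel parameter. -/
def rectStripAux : ℕ → ℕ × ℕ → ℕ × ℕ → List ℕ
  | 0, _, _ => []
  | fuel + 1, (a, r), (b, s) =>
    if a = 0 ∨ r = 0 ∨ b = 0 ∨ s = 0 then []
    else if b ≤ a then (b * r) :: rectStripAux fuel (a - b, r) (b, s - r)
    else (a * s) :: rectStripAux fuel (a, r - s) (b - a, s)

/-- The partition of strip type derived from the pair of rectangles `(a^r)`, `(b^s)`. -/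
def rectStrip (p q : ℕ × ℕ) : List ℕ :=
  rectStripAux (p.1 * p.2 + 1) p q


lemma rectStripAux_key (k : ℕ) : ∀ n, rectStripAux (n + k + 3) (2 * k + 1, 2) (2, 2 * k + 1) = List.replicate k 4 ++ [1, 1] := by
  induction k with
  | zero =>
    intro n
    show rectStripAux (n + 3) (1, 2) (2, 1) = _
    rw [show n + 3 = (n+1)+1+1 by ring]
    simp [rectStripAux]
  | succ k ih =>
    intro n
    have h1 : n + (k + 1) + 3 = (n + k + 3) + 1 := by ring
    rw [h1]
    have : rectStripAux ((n + k + 3) + 1) (2 * (k+1) + 1, 2) (2, 2 * (k+1) + 1)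
        = 4 :: rectStripAux (n + k + 3) (2 * k + 1, 2) (2, 2 * k + 1) := by
      conv_lhs => rw [rectStripAux]
      rw [if_neg (by omega), if_pos (by omega)]
      simp only [show 2*(k+1)+1-2 = 2*k+1 from by omega]
    rw [this, ih]
    simp [List.replicate_succ]

/-- for odd `m = 2k+1`, the partition of strip type derived from
`λ = (m, m)` and `μ = (2^m)` is `ν = (4^k, 1, 1)`. -/
theorem strip_two_by_m (k : ℕ) (hk : 1 ≤ k) :
    rectStrip (2 * k + 1, 2) (2, 2 * k + 1) = List.replicate k 4 ++ [1, 1] := by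
  have : (2 * k + 1) * 2 + 1 = 3 * k + k + 3 := by ring
  rw [rectStrip]
  simp only [this]
  exact rectStripAux_key k (3 * k)
end

section
/- Suppose n divides m with p = m/n. The partition of strip type derived from λ = (p^n) (n rows of p) and μ = (1^m) (m rows of 1) is ν = (n^p) (p rows of n). Consequently, the maximal lexicographic spectrum of bipartite states with margins (1/n)I_n and (1/m)I_m is the uniform distribution (1/p, ..., 1/p) of length p. -/
open ComplexOrder

/-- The spectrum of a Hermitian matrix, as the list of eigenvalues in decreasing order. -/
noncomputable def specList {ι : Type*} [Fintype ι] [DecidableEq ι]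
    (ρ : Matrix ι ι ℂ) (hρ : ρ.IsHermitian) : List ℝ :=
  ((Multiset.map hρ.eigenvalues Finset.univ.val).sort (· ≤ ·)).reverse

/-- Lexicographic order (non-strict) on lists of reals. -/
def lexLe (l₁ l₂ : List ℝ) : Prop := l₁ = l₂ ∨ List.Lex (· < ·) l₁ l₂

/-!
Each step of the strip construction removes a column of height `n` from `(p^n)` and `n` rows
from `(1^m)`, so it outputs `n` exactly `p` times.

For the spectrum: if `ρ` has second margin `I/m` and `v` is a unit eigenvector for `λ`, view `v`
as an `n × m` array and pick a row `a₀` of squared norm `r ≥ 1/n`. Testing `ρ ≥ λ |v⟩⟨v|` on the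
vectors `|a⟩ ⊗ v(a₀, ·)` and summing over `a` only sees the margin, and gives `λ r² ≤ r / m`, so
every eigenvalue is at most `n / m = 1/p`. With trace one, the spectrum is then lexicographically
below `(1/p, …, 1/p, 0, …)`. Equality holds for the uniform mixture of the `p` maximally entangled
vectors `∑ₐ |a⟩|e(a, j)⟩`, `e : [n] × [p] ≃ [m]`, which are orthogonal with disjoint supports on
the second factor: that state is `1/p` times a projection of rank `p`.
-/

open Matrix

theorem rectStripAux_eq_replicate {n : ℕ} (hn : 0 < n) :
    ∀ k fuel, k < fuel → rectStripAux fuel (k, n) (1, n * k) = List.replicate k n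
  | 0, fuel + 1, _ => by simp [rectStripAux]
  | k + 1, fuel + 1, hk => by
    have hcols : n * (k + 1) - n = n * k := by rw [Nat.mul_succ, Nat.add_sub_cancel]
    simp [rectStripAux, hn.ne', hcols, rectStripAux_eq_replicate hn k fuel (by omega),
      List.replicate_succ]

namespace List

theorem lexLe_replicate_append_replicate {c : ℝ} {k q : ℕ} {l : List ℝ}
    (hlen : l.length = k + q) (hbound : ∀ x ∈ l, 0 ≤ x ∧ x ≤ c) (hsum : l.sum = k * c) :
    lexLe l (replicate k c ++ replicate q 0) := by
  induction l generalizing k with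
  | nil =>
    obtain ⟨rfl, rfl⟩ : k = 0 ∧ q = 0 := by simp at hlen; omega
    exact Or.inl rfl
  | cons a t ih =>
    cases k with
    | zero =>
      refine Or.inl (eq_replicate_iff.2 ⟨by simpa using hlen, fun x hx => ?_⟩)
      have hle := single_le_sum (fun y hy => (hbound y hy).1) x hx
      exact le_antisymm (by simpa [hsum] using hle) (hbound x hx).1
    | succ k =>
      rcases (hbound a mem_cons_self).2.lt_or_eq with hlt | rfl
      · exact Or.inr (Lex.rel hlt)
      · have ht := ih (k := k) (by simp at hlen; omega)
          (fun x hx => hbound x (mem_cons_of_mem a hx))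
          (by simp only [sum_cons, Nat.cast_succ] at hsum; linarith)
        rw [replicate_succ, cons_append]
        exact ht.imp (congrArg _) Lex.cons

theorem eq_replicate_append_replicate_of_pairwise {c : ℝ} (hc : 0 < c) {k q : ℕ} {l : List ℝ}
    (hsorted : l.Pairwise (· ≥ ·)) (hvals : ∀ x ∈ l, x = 0 ∨ x = c)
    (hlen : l.length = k + q) (hsum : l.sum = k * c) :
    l = replicate k c ++ replicate q 0 := by
  induction l generalizing k with
  | nil =>
    obtain ⟨rfl, rfl⟩ : k = 0 ∧ q = 0 := by simp at hlen; omega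
    rfl
  | cons a t ih =>
    rw [pairwise_cons] at hsorted
    rcases hvals a mem_cons_self with rfl | rfl
    · have hzero : ∀ x ∈ t, x = 0 := fun x hx =>
        (hvals x (mem_cons_of_mem _ hx)).resolve_right fun h => by
          linarith [hsorted.1 x hx]
      obtain rfl : k = 0 := by
        have : (k : ℝ) * c = 0 := by rw [← hsum, sum_cons, sum_eq_zero hzero, add_zero]
        exact_mod_cast (mul_eq_zero.1 this).resolve_right hc.ne'
      simpa [eq_replicate_iff, hlen] using hzero
    · obtain ⟨k, rfl⟩ : ∃ k', k = k' + 1 := by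
        refine Nat.exists_eq_succ_of_ne_zero fun hk => ?_
        have : 0 ≤ t.sum := sum_nonneg fun x hx => (hvals x (mem_cons_of_mem _ hx)).elim
          (·.ge) (fun h => h ▸ hc.le)
        simp only [sum_cons, hk, Nat.cast_zero, zero_mul] at hsum
        linarith
      rw [ih (k := k) hsorted.2 (fun x hx => hvals x (mem_cons_of_mem _ hx))
        (by simp at hlen; omega) (by simp only [sum_cons, Nat.cast_succ] at hsum; linarith),
        replicate_succ, cons_append]

end List

section SpecList

variable {ι : Type*} [Fintype ι] [DecidableEq ι] {ρ : Matrix ι ι ℂ} (hρ : ρ.IsHermitian)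

theorem specList_pairwise : (specList ρ hρ).Pairwise (· ≥ ·) := by
  rw [specList, List.pairwise_reverse]
  exact Multiset.pairwise_sort _ _

theorem specList_length : (specList ρ hρ).length = Fintype.card ι := by
  simp [specList]

theorem mem_specList {x : ℝ} : x ∈ specList ρ hρ ↔ ∃ i, hρ.eigenvalues i = x := by
  simp [specList]

theorem specList_sum_eq_one (htr : ρ.trace = 1) : (specList ρ hρ).sum = 1 := by
  have h := congrArg RCLike.re hρ.trace_eq_sum_eigenvalues
  rw [htr, map_sum] at h
  rw [specList, List.sum_reverse, ← Multiset.sum_coe, Multiset.sort_eq]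
  simpa using h.symm

end SpecList

namespace Matrix

variable {ι 𝕜 : Type*} [Fintype ι] [DecidableEq ι] [RCLike 𝕜] {ρ : Matrix ι ι 𝕜}

theorem IsHermitian.eigenvalues_eq_zero_or_eq_of_mul_self_eq (hρ : ρ.IsHermitian) {c : ℝ}
    (hsq : ρ * ρ = (c : 𝕜) • ρ) (i : ι) : hρ.eigenvalues i = 0 ∨ hρ.eigenvalues i = c := by
  set v := ⇑(hρ.eigenvectorBasis i)
  set μ := hρ.eigenvalues i
  have hv : v ≠ 0 := fun h =>
    hρ.eigenvectorBasis.orthonormal.ne_zero i (by ext x; exact congrFun h x)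
  have hρv : ρ *ᵥ v = (μ : 𝕜) • v := by
    rw [hρ.mulVec_eigenvectorBasis, RCLike.real_smul_eq_coe_smul (K := 𝕜)]
  have hcoef : ((μ * μ : ℝ) : 𝕜) • v = ((c * μ : ℝ) : 𝕜) • v := by
    have h := congrArg (· *ᵥ v) hsq
    simp only [← mulVec_mulVec, smul_mulVec, hρv, mulVec_smul, smul_smul] at h
    exact_mod_cast h
  have hμ : μ * μ = c * μ := RCLike.ofReal_injective (smul_left_injective 𝕜 hv hcoef)
  have : μ * (μ - c) = 0 := by linarith
  exact (mul_eq_zero.1 this).imp_right sub_eq_zero.1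

theorem PosSemidef.eigenvalues_mul_normSq_le (hρ : ρ.PosSemidef) (i : ι) (z : ι → 𝕜) :
    hρ.1.eigenvalues i * ‖star ⇑(hρ.1.eigenvectorBasis i) ⬝ᵥ z‖ ^ 2 ≤
      RCLike.re (star z ⬝ᵥ (ρ *ᵥ z)) := by
  set U : Matrix ι ι 𝕜 := (hρ.1.eigenvectorUnitary : Matrix ι ι 𝕜)
  set w := star U *ᵥ z
  have hw : star z ᵥ* U = star w := by rw [star_mulVec, ← star_eq_conjTranspose, star_star]
  have hform : star z ⬝ᵥ (ρ *ᵥ z) = ∑ j, (hρ.1.eigenvalues j : 𝕜) * (star (w j) * w j) := by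
    conv_lhs => rw [hρ.1.spectral_theorem, Unitary.conjStarAlgAut_apply]
    rw [← mulVec_mulVec, ← mulVec_mulVec, dotProduct_mulVec, hw]
    simp only [dotProduct, mulVec_diagonal, Pi.star_apply, Function.comp_apply]
    exact Finset.sum_congr rfl fun j _ => by ring
  have hwi : w i = star ⇑(hρ.1.eigenvectorBasis i) ⬝ᵥ z := by
    simp [w, U, mulVec, dotProduct]
  rw [hform, map_sum, ← hwi]
  simp only [RCLike.star_def, RCLike.conj_mul, ← RCLike.ofReal_pow, ← RCLike.ofReal_mul,
    RCLike.ofReal_re]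
  exact Finset.single_le_sum (f := fun j => hρ.1.eigenvalues j * ‖w j‖ ^ 2)
    (fun j _ => mul_nonneg (hρ.eigenvalues_nonneg j) (sq_nonneg _)) (Finset.mem_univ i)

end Matrix

section PartialTrace

variable {n m : ℕ} {ρ : Matrix (Fin n × Fin m) (Fin n × Fin m) ℂ}

theorem trace_trA : (trA ρ).trace = ρ.trace := by
  simp only [trace, trA, diag_apply, Fintype.sum_prod_type]
  exact Finset.sum_comm

def singleTensor (a : Fin n) (u : Fin m → ℂ) : Fin n × Fin m → ℂ :=
  fun x => if x.1 = a then u x.2 else 0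

theorem sum_dotProduct_mulVec_singleTensor (u : Fin m → ℂ) :
    ∑ a, star (singleTensor a u) ⬝ᵥ (ρ *ᵥ singleTensor a u) = star u ⬝ᵥ (trA ρ *ᵥ u) := by
  have hslice : ∀ a, star (singleTensor a u) ⬝ᵥ (ρ *ᵥ singleTensor a u) =
      ∑ b, ∑ b', star (u b) * (ρ (a, b) (a, b') * u b') := fun a => by
    simp [singleTensor, dotProduct, mulVec, Fintype.sum_prod_type, apply_ite star,
      Finset.mul_sum]
  rw [Finset.sum_congr rfl fun a _ => hslice a, Finset.sum_comm]
  simp only [dotProduct, mulVec, trA, Pi.star_apply, Finset.sum_mul, Finset.mul_sum]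
  exact Finset.sum_congr rfl fun b _ => Finset.sum_comm

theorem Matrix.PosSemidef.eigenvalues_mul_sq_le_of_trA_eq (hρ : ρ.PosSemidef)
    (htrA : trA ρ = (m : ℂ)⁻¹ • 1) (i : Fin n × Fin m) (a₀ : Fin n) :
    hρ.1.eigenvalues i * (∑ b, ‖hρ.1.eigenvectorBasis i (a₀, b)‖ ^ 2) ^ 2 ≤
      (∑ b, ‖hρ.1.eigenvectorBasis i (a₀, b)‖ ^ 2) / m := by
  set v := hρ.1.eigenvectorBasis i
  set r := ∑ b, ‖v (a₀, b)‖ ^ 2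
  set u : Fin m → ℂ := fun b => v (a₀, b)
  set q : Fin n → ℝ := fun a => RCLike.re (star (singleTensor a u) ⬝ᵥ (ρ *ᵥ singleTensor a u))
  have hu : star u ⬝ᵥ u = r := by
    simp [u, r, dotProduct, RCLike.star_def, RCLike.conj_mul]
  have hvu : star ⇑v ⬝ᵥ singleTensor a₀ u = r := by
    rw [← hu]
    simp [singleTensor, u, dotProduct, Fintype.sum_prod_type]
  have hq : ∑ a, q a = r / m := by
    rw [← map_sum, sum_dotProduct_mulVec_singleTensor, htrA, smul_mulVec, one_mulVec,
      dotProduct_smul, hu, smul_eq_mul, ← Complex.ofReal_natCast, ← Complex.ofReal_inv,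
      ← Complex.ofReal_mul, RCLike.re_to_complex, Complex.ofReal_re, div_eq_inv_mul]
  calc hρ.1.eigenvalues i * r ^ 2 = hρ.1.eigenvalues i * ‖star ⇑v ⬝ᵥ singleTensor a₀ u‖ ^ 2 := by
        rw [hvu, Complex.norm_real, Real.norm_of_nonneg (by positivity)]
    _ ≤ q a₀ := hρ.eigenvalues_mul_normSq_le i _
    _ ≤ ∑ a, q a :=
        Finset.single_le_sum (f := q) (fun a _ => hρ.re_dotProduct_nonneg _) (Finset.mem_univ a₀)
    _ = r / m := hq

theorem Matrix.PosSemidef.eigenvalues_le_of_trA_eq (hn : 0 < n) (hρ : ρ.PosSemidef)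
    (htrA : trA ρ = (m : ℂ)⁻¹ • 1) (i : Fin n × Fin m) :
    hρ.1.eigenvalues i ≤ n / m := by
  set r : Fin n → ℝ := fun a => ∑ b, ‖hρ.1.eigenvectorBasis i (a, b)‖ ^ 2
  have hr : ∑ a, r a = 1 := by
    rw [← Fintype.sum_prod_type', ← EuclideanSpace.norm_sq_eq,
      hρ.1.eigenvectorBasis.orthonormal.1 i, one_pow]
  obtain ⟨a₀, -, hra₀⟩ : ∃ a ∈ Finset.univ, (n : ℝ)⁻¹ ≤ r a := by
    refine Finset.exists_le_of_sum_le ⟨⟨0, hn⟩, Finset.mem_univ _⟩ ?_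
    simp [hr, hn.ne']
  have hr₀ : 0 < r a₀ := lt_of_lt_of_le (by positivity) hra₀
  have hμr : hρ.1.eigenvalues i * r a₀ ≤ (m : ℝ)⁻¹ := by
    have := hρ.eigenvalues_mul_sq_le_of_trA_eq htrA i a₀
    rw [← mul_le_mul_iff_left₀ hr₀]
    linarith [show r a₀ / m = (m : ℝ)⁻¹ * r a₀ by ring]
  have hμ := hρ.eigenvalues_nonneg i
  calc hρ.1.eigenvalues i = n * (hρ.1.eigenvalues i * (n : ℝ)⁻¹) := by field_simp
    _ ≤ n * (hρ.1.eigenvalues i * r a₀) := by gcongr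
    _ ≤ n * (m : ℝ)⁻¹ := by gcongr
    _ = n / m := (div_eq_mul_inv _ _).symm

end PartialTrace

section MaxEntangledMixture

variable {n m : ℕ} {J : Type*} (e : Fin n × J ≃ Fin m)

def maxEntangledCols : Matrix (Fin n × Fin m) J ℂ :=
  of fun x j => if e (x.1, j) = x.2 then 1 else 0

theorem conjTranspose_maxEntangledCols_mul [DecidableEq J] :
    (maxEntangledCols e)ᴴ * maxEntangledCols e = (n : ℂ) • (1 : Matrix J J ℂ) := by
  ext j j'
  simp [maxEntangledCols, mul_apply, Fintype.sum_prod_type, one_apply]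

variable [Fintype J]

theorem trA_maxEntangledCols_mul_conjTranspose :
    trA (maxEntangledCols e * (maxEntangledCols e)ᴴ) = 1 := by
  ext b b'
  calc _ = ∑ x, if e x = b' then if e x = b then (1 : ℂ) else 0 else 0 := by
        simp [trA, maxEntangledCols, mul_apply, Fintype.sum_prod_type]
    _ = ∑ c, if c = b' then if c = b then (1 : ℂ) else 0 else 0 :=
        e.sum_comp fun c => if c = b' then if c = b then (1 : ℂ) else 0 else 0
    _ = _ := by simp [one_apply, eq_comm]

theorem trB_maxEntangledCols_mul_conjTranspose :
    trB (maxEntangledCols e * (maxEntangledCols e)ᴴ) = (Fintype.card J : ℂ) • 1 := by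
  ext a a'
  simp only [trB, maxEntangledCols, mul_apply, conjTranspose_apply, of_apply]
  rw [Finset.sum_comm]
  simp [one_apply]

noncomputable def maxEntangledMixture : Matrix (Fin n × Fin m) (Fin n × Fin m) ℂ :=
  (m : ℂ)⁻¹ • (maxEntangledCols e * (maxEntangledCols e)ᴴ)

theorem posSemidef_maxEntangledMixture : (maxEntangledMixture e).PosSemidef :=
  (posSemidef_self_mul_conjTranspose _).smul (by simp)

theorem trA_maxEntangledMixture : trA (maxEntangledMixture e) = (m : ℂ)⁻¹ • 1 := by
  rw [← trA_maxEntangledCols_mul_conjTranspose e]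
  ext
  simp [maxEntangledMixture, trA, Finset.mul_sum]

theorem trB_maxEntangledMixture :
    trB (maxEntangledMixture e) = ((m : ℂ)⁻¹ * Fintype.card J) • 1 := by
  rw [mul_smul, ← trB_maxEntangledCols_mul_conjTranspose e]
  ext
  simp [maxEntangledMixture, trB, Finset.mul_sum]

theorem trace_maxEntangledMixture (hm : m ≠ 0) : (maxEntangledMixture e).trace = 1 := by
  rw [← trace_trA, trA_maxEntangledMixture, trace_smul, trace_one, Fintype.card_fin, smul_eq_mul,
    inv_mul_cancel₀ (Nat.cast_ne_zero.2 hm)]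

theorem maxEntangledMixture_mul_self [DecidableEq J] :
    maxEntangledMixture e * maxEntangledMixture e =
      ((n / m : ℝ) : ℂ) • maxEntangledMixture e := by
  simp only [maxEntangledMixture, smul_mul_smul, Matrix.mul_assoc]
  rw [← Matrix.mul_assoc (maxEntangledCols e)ᴴ, conjTranspose_maxEntangledCols_mul]
  simp only [Matrix.smul_mul, Matrix.mul_smul, Matrix.one_mul, smul_smul]
  congr 1
  push_cast
  ring

theorem specList_maxEntangledMixture [DecidableEq J] [Nonempty J] (hn : 0 < n) :
    specList (maxEntangledMixture e) (posSemidef_maxEntangledMixture e).1 =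
      List.replicate (Fintype.card J) (Fintype.card J : ℝ)⁻¹ ++
        List.replicate (n * m - Fintype.card J) 0 := by
  have hm : m = n * Fintype.card J := by simpa using (Fintype.card_congr e).symm
  have hJ : 0 < Fintype.card J := Fintype.card_pos
  have hρ := posSemidef_maxEntangledMixture e
  refine List.eq_replicate_append_replicate_of_pairwise (by positivity) (specList_pairwise _)
    (fun x hx => ?_) ?_ ?_
  · obtain ⟨i, rfl⟩ := (mem_specList _).1 hx
    have hratio : (n : ℝ) / m = (Fintype.card J : ℝ)⁻¹ := by
      rw [hm]; push_cast; field_simp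
    rw [← hratio]
    exact hρ.1.eigenvalues_eq_zero_or_eq_of_mul_self_eq (maxEntangledMixture_mul_self e) i
  · have : Fintype.card J ≤ n * m := by
      rw [hm, ← mul_assoc]; exact Nat.le_mul_of_pos_left _ (Nat.mul_pos hn hn)
    rw [specList_length, Fintype.card_prod, Fintype.card_fin, Fintype.card_fin]
    omega
  · rw [specList_sum_eq_one _ (trace_maxEntangledMixture e (hm ▸ (Nat.mul_pos hn hJ).ne')),
      mul_inv_cancel₀ (by positivity)]

end MaxEntangledMixture

theorem lexLe_specList_of_trA_eq_smul_one {n m p : ℕ} (hn : 0 < n) (hp : 0 < p)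
    (hm : m = n * p) {ρ : Matrix (Fin n × Fin m) (Fin n × Fin m) ℂ} (hρ : ρ.PosSemidef)
    (htr : ρ.trace = 1) (htrA : trA ρ = (m : ℂ)⁻¹ • 1) :
    lexLe (specList ρ hρ.1) (List.replicate p (p : ℝ)⁻¹ ++ List.replicate (n * m - p) 0) := by
  refine List.lexLe_replicate_append_replicate ?_ (fun x hx => ?_) ?_
  · have : p ≤ n * m := by
      rw [hm, ← mul_assoc]; exact Nat.le_mul_of_pos_left _ (Nat.mul_pos hn hn)
    rw [specList_length, Fintype.card_prod, Fintype.card_fin, Fintype.card_fin]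
    omega
  · obtain ⟨i, rfl⟩ := (mem_specList _).1 hx
    have hratio : (n : ℝ) / m = (p : ℝ)⁻¹ := by
      rw [hm]; push_cast; field_simp
    exact ⟨hρ.eigenvalues_nonneg i, hratio ▸ hρ.eigenvalues_le_of_trA_eq hn htrA i⟩
  · rw [specList_sum_eq_one _ htr, mul_inv_cancel₀ (by positivity)]

/-- for `n ∣ m` with `p = m/n`, the partition of strip type derived from
`λ = (p^n)` and `μ = (1^m)` is `ν = (n^p)`.  Consequently the maximal lexicographic
spectrum of states on `ℂ^n ⊗ ℂ^m` with margins `(1/n) I_n` and `(1/m) I_m` is the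
uniform distribution `(1/p, …, 1/p)` of length `p` (padded by zeros). -/
theorem strip_divisible_and_max_spectrum (n m p : ℕ)
    (hn : 0 < n) (hp : 0 < p) (hm : m = n * p) :
    rectStrip (p, n) (1, m) = List.replicate p n ∧
      (∃ ρ : Matrix (Fin n × Fin m) (Fin n × Fin m) ℂ, ∃ hρ : ρ.PosSemidef,
        ρ.trace = 1 ∧
        trB ρ = ((n : ℂ))⁻¹ • (1 : Matrix (Fin n) (Fin n) ℂ) ∧
        trA ρ = ((m : ℂ))⁻¹ • (1 : Matrix (Fin m) (Fin m) ℂ) ∧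
        specList ρ hρ.1 =
          List.replicate p ((p : ℝ)⁻¹) ++ List.replicate (n * m - p) 0) ∧
      (∀ ρ : Matrix (Fin n × Fin m) (Fin n × Fin m) ℂ, ∀ hρ : ρ.PosSemidef,
        ρ.trace = 1 →
        trB ρ = ((n : ℂ))⁻¹ • (1 : Matrix (Fin n) (Fin n) ℂ) →
        trA ρ = ((m : ℂ))⁻¹ • (1 : Matrix (Fin m) (Fin m) ℂ) →
        lexLe (specList ρ hρ.1)
          (List.replicate p ((p : ℝ)⁻¹) ++ List.replicate (n * m - p) 0)) := by
  obtain e : Fin n × Fin p ≃ Fin m := Fintype.equivOfCardEq (by simp [hm])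
  have : Nonempty (Fin p) := ⟨⟨0, hp⟩⟩
  refine ⟨?_, ⟨maxEntangledMixture e, posSemidef_maxEntangledMixture e,
      trace_maxEntangledMixture e (hm ▸ (Nat.mul_pos hn hp).ne'), ?_,
      trA_maxEntangledMixture e, by simpa using specList_maxEntangledMixture e hn⟩,
    fun ρ hρ htr _ htrA => lexLe_specList_of_trA_eq_smul_one hn hp hm hρ htr htrA⟩
  · rw [rectStrip, hm]
    exact rectStripAux_eq_replicate hn p _ (Nat.lt_succ_of_le (Nat.le_mul_of_pos_right p hn))
  · rw [trB_maxEntangledMixture, hm, Fintype.card_fin]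
    congr 1
    push_cast
    field_simp
end

section
/- Let λ and μ be rectangular partitions of the same integer n (all nonzero parts of λ equal, all nonzero parts of μ equal). Then there exists exactly one pair of partitions (λ', μ') with c^λ_{λ∩μ, λ'} ≠ 0 and c^μ_{λ∩μ, μ'} ≠ 0, namely the rectangular partitions λ' = λ \ (λ∩μ) and μ' = μ \ (λ∩μ) obtained by removing λ∩μ. -/
/-- The rectangular partition with `r` rows of length `a`. -/
def rectFn (a r : ℕ) : ℕ → ℕ := fun i => if i < r then a else 0

lemma ncard_eq (P : ℕ × ℕ → Prop) (F : Finset (ℕ × ℕ)) (h : ∀ c, P c ↔ c ∈ F) :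
    Nat.card {c : ℕ × ℕ // P c} = F.card := by
  have hs : {c : ℕ × ℕ | P c} = ↑F := Set.ext fun c => by simpa using h c
  calc Nat.card {c : ℕ × ℕ // P c}
      = Nat.card {c : ℕ × ℕ | P c} := rfl
    _ = ({c : ℕ × ℕ | P c} : Set (ℕ × ℕ)).ncard := Nat.card_coe_set_eq _
    _ = F.card := by rw [hs, Set.ncard_coe_finset]

lemma finite_pred (P : ℕ × ℕ → Prop) (i1 j1 : ℕ) (h : ∀ c, P c → c.1 < i1 ∧ c.2 < j1) :
    Finite {c : ℕ × ℕ // P c} := by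
  have hsub : {c : ℕ × ℕ | P c} ⊆ ↑(Finset.range i1 ×ˢ Finset.range j1) := by
    intro c hc
    simp only [Finset.coe_product, Set.mem_prod, Finset.mem_coe, Finset.mem_range]
    exact h c hc
  exact ((Finset.finite_toSet _).subset hsub).to_subtype

/-- The canonical filling of a translated-rectangle skew shape. -/
def T0fn (i0 i1 j0 j1 : ℕ) : ℕ × ℕ → ℕ :=
  fun c => if i0 ≤ c.1 ∧ c.1 < i1 ∧ j0 ≤ c.2 ∧ c.2 < j1 then c.1 - i0 + 1 else 0

lemma T0_count (lam nu : ℕ → ℕ) (i0 i1 j0 j1 : ℕ)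
    (hshape : ∀ c : ℕ × ℕ, inSkew lam nu c ↔ i0 ≤ c.1 ∧ c.1 < i1 ∧ j0 ≤ c.2 ∧ c.2 < j1)
    (t : ℕ) :
    Nat.card {c : ℕ × ℕ // inSkew lam nu c ∧ T0fn i0 i1 j0 j1 c = t + 1} =
      if t < i1 - i0 then j1 - j0 else 0 := by
  by_cases ht : t < i1 - i0
  · rw [if_pos ht]
    have hmem : ∀ c : ℕ × ℕ, (inSkew lam nu c ∧ T0fn i0 i1 j0 j1 c = t + 1) ↔
        c ∈ (Finset.Ico j0 j1).image (fun j => ((i0 + t, j) : ℕ × ℕ)) := by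
      rintro ⟨c1, c2⟩
      simp only [Finset.mem_image, Finset.mem_Ico, hshape, T0fn, Prod.mk.injEq]
      constructor
      · rintro ⟨⟨h1, h2, h3, h4⟩, h5⟩
        rw [if_pos ⟨h1, h2, h3, h4⟩] at h5
        exact ⟨c2, ⟨h3, h4⟩, by omega, rfl⟩
      · rintro ⟨j, ⟨hj1, hj2⟩, he1, he2⟩
        have hb : i0 ≤ c1 ∧ c1 < i1 ∧ j0 ≤ c2 ∧ c2 < j1 := by omega
        exact ⟨hb, by rw [if_pos hb]; omega⟩
    rw [ncard_eq _ _ hmem,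
      Finset.card_image_of_injective _ (fun x y h => by simpa using h), Nat.card_Ico]
  · rw [if_neg ht]
    have hmem : ∀ c : ℕ × ℕ, (inSkew lam nu c ∧ T0fn i0 i1 j0 j1 c = t + 1) ↔
        c ∈ (∅ : Finset (ℕ × ℕ)) := by
      intro c
      simp only [Finset.notMem_empty, iff_false]
      rintro ⟨hc, h5⟩
      obtain ⟨h1, h2, h3, h4⟩ := (hshape c).1 hc
      rw [T0fn, if_pos ⟨h1, h2, h3, h4⟩] at h5
      omega
    rw [ncard_eq _ _ hmem, Finset.card_empty]

lemma T0_uniq (lam nu : ℕ → ℕ) (i0 i1 j0 j1 : ℕ)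
    (hshape : ∀ c : ℕ × ℕ, inSkew lam nu c ↔ i0 ≤ c.1 ∧ c.1 < i1 ∧ j0 ≤ c.2 ∧ c.2 < j1)
    (mu' : ℕ → ℕ) (T : ℕ × ℕ → ℕ) (hT : IsLRFilling lam mu' nu T) :
    T = T0fn i0 i1 j0 j1 := by
  obtain ⟨h0, h1, hrow, hcol, -, hlat⟩ := hT
  -- lower bound by column strictness
  have lb : ∀ k (i j : ℕ), inSkew lam nu (i, j) → i - i0 = k → k + 1 ≤ T (i, j) := by
    intro k
    induction k with
    | zero => intro i j hc _; exact h1 _ hc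
    | succ k ih =>
      intro i j hc hk
      obtain ⟨hb1, hb2, hb3, hb4⟩ : i0 ≤ i ∧ i < i1 ∧ j0 ≤ j ∧ j < j1 := (hshape (i, j)).1 hc
      have hcell : inSkew lam nu (i - 1, j) :=
        (hshape (i - 1, j)).2 ⟨by omega, by omega, hb3, hb4⟩
      have hlt := hcol (i - 1) i j (by omega) hcell hc
      have := ih (i - 1) j hcell (by omega)
      omega
  have ub_eq : ∀ i j : ℕ, inSkew lam nu (i, j) → T (i, j) = i - i0 + 1 := by
    intro i
    induction i using Nat.strong_induction_on with
    | _ i IH =>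
      intro j hc
      obtain ⟨hb1, hb2, hb3, hb4⟩ : i0 ≤ i ∧ i < i1 ∧ j0 ≤ j ∧ j < j1 := (hshape (i, j)).1 hc
      have hcell' : inSkew lam nu (i, j1 - 1) :=
        (hshape (i, j1 - 1)).2 ⟨hb1, hb2, by omega, by omega⟩
      have hub : T (i, j1 - 1) ≤ i - i0 + 1 := by
        by_contra hv
        push_neg at hv
        set v := T (i, j1 - 1) with hvdef
        have hv2 : 2 ≤ v := by omega
        have hempty : ∀ c : ℕ × ℕ, ¬(inSkew lam nu c ∧
            (c.1 < i ∨ (c.1 = i ∧ j1 - 1 ≤ c.2)) ∧ T c = (v - 2) + 1) := by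
          rintro c ⟨hcs, hcpre, hcv⟩
          obtain ⟨hc1, hc2, hc3, hc4⟩ : i0 ≤ c.1 ∧ c.1 < i1 ∧ j0 ≤ c.2 ∧ c.2 < j1 :=
            (hshape c).1 hcs
          rcases hcpre with hltc | ⟨heq, hge⟩
          · have hTc : T c = c.1 - i0 + 1 := IH c.1 hltc c.2 hcs
            omega
          · have hceq : c = (i, j1 - 1) := by
              obtain ⟨ca, cb⟩ := c
              simp only [Prod.mk.injEq]
              constructor <;> omega
            rw [hceq] at hcv
            omega
        have h0' : Nat.card {c : ℕ × ℕ // inSkew lam nu c ∧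
            (c.1 < i ∨ (c.1 = i ∧ j1 - 1 ≤ c.2)) ∧ T c = (v - 2) + 1} = 0 := by
          rw [ncard_eq _ ∅ (fun c => by simpa using hempty c), Finset.card_empty]
        have hpos : 0 < Nat.card {c : ℕ × ℕ // inSkew lam nu c ∧
            (c.1 < i ∨ (c.1 = i ∧ j1 - 1 ≤ c.2)) ∧ T c = (v - 2) + 2} := by
          haveI : Finite {c : ℕ × ℕ // inSkew lam nu c ∧
              (c.1 < i ∨ (c.1 = i ∧ j1 - 1 ≤ c.2)) ∧ T c = (v - 2) + 2} := by
            apply finite_pred _ i1 j1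
            rintro c ⟨hcs, -, -⟩
            obtain ⟨-, hA, -, hB⟩ : i0 ≤ c.1 ∧ c.1 < i1 ∧ j0 ≤ c.2 ∧ c.2 < j1 :=
              (hshape c).1 hcs
            exact ⟨hA, hB⟩
          haveI : Nonempty {c : ℕ × ℕ // inSkew lam nu c ∧
              (c.1 < i ∨ (c.1 = i ∧ j1 - 1 ≤ c.2)) ∧ T c = (v - 2) + 2} :=
            ⟨⟨(i, j1 - 1), hcell', Or.inr ⟨rfl, le_rfl⟩, by omega⟩⟩
          exact Nat.card_pos
        have hlat' : Nat.card {c : ℕ × ℕ // inSkew lam nu c ∧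
            (c.1 < i ∨ (c.1 = i ∧ j1 - 1 ≤ c.2)) ∧ T c = (v - 2) + 2} ≤
            Nat.card {c : ℕ × ℕ // inSkew lam nu c ∧
            (c.1 < i ∨ (c.1 = i ∧ j1 - 1 ≤ c.2)) ∧ T c = (v - 2) + 1} :=
          hlat (i, j1 - 1) (v - 2)
        omega
      have h5 := hrow i j (j1 - 1) (by omega) hc hcell'
      have h6 := lb (i - i0) i j hc rfl
      omega
  funext c
  obtain ⟨c1, c2⟩ := c
  by_cases hc : inSkew lam nu (c1, c2)
  · obtain ⟨hb1, hb2, hb3, hb4⟩ : i0 ≤ c1 ∧ c1 < i1 ∧ j0 ≤ c2 ∧ c2 < j1 :=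
      (hshape (c1, c2)).1 hc
    rw [ub_eq c1 c2 hc]
    simp [T0fn, hb1, hb2, hb3, hb4]
  · have hnb : ¬(i0 ≤ c1 ∧ c1 < i1 ∧ j0 ≤ c2 ∧ c2 < j1) :=
      fun hb => hc ((hshape (c1, c2)).2 hb)
    rw [h0 _ hc]
    simp [T0fn, hnb]

lemma T0_fill (lam nu : ℕ → ℕ) (i0 i1 j0 j1 : ℕ)
    (hshape : ∀ c : ℕ × ℕ, inSkew lam nu c ↔ i0 ≤ c.1 ∧ c.1 < i1 ∧ j0 ≤ c.2 ∧ c.2 < j1) :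
    IsLRFilling lam (fun t => if t < i1 - i0 then j1 - j0 else 0) nu (T0fn i0 i1 j0 j1) := by
  refine ⟨?_, ?_, ?_, ?_, ?_, ?_⟩
  · intro c hc
    have hnb : ¬(i0 ≤ c.1 ∧ c.1 < i1 ∧ j0 ≤ c.2 ∧ c.2 < j1) :=
      fun hb => hc ((hshape c).2 hb)
    simp [T0fn, hnb]
  · intro c hc
    obtain ⟨hb1, hb2, hb3, hb4⟩ := (hshape c).1 hc
    simp [T0fn, hb1, hb2, hb3, hb4]
  · intro i j j' hjj hc hc'
    obtain ⟨hb1, hb2, hb3, hb4⟩ : i0 ≤ i ∧ i < i1 ∧ j0 ≤ j ∧ j < j1 := (hshape (i, j)).1 hc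
    obtain ⟨-, -, hb3', hb4'⟩ : i0 ≤ i ∧ i < i1 ∧ j0 ≤ j' ∧ j' < j1 := (hshape (i, j')).1 hc'
    simp [T0fn, hb1, hb2, hb3, hb4, hb3', hb4']
  · intro i i' j hii hc hc'
    obtain ⟨hb1, hb2, hb3, hb4⟩ : i0 ≤ i ∧ i < i1 ∧ j0 ≤ j ∧ j < j1 := (hshape (i, j)).1 hc
    obtain ⟨hb1', hb2', -, -⟩ : i0 ≤ i' ∧ i' < i1 ∧ j0 ≤ j ∧ j < j1 := (hshape (i', j)).1 hc'
    have e1 : T0fn i0 i1 j0 j1 (i, j) = i - i0 + 1 := by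
      simp [T0fn, hb1, hb2, hb3, hb4]
    have e2 : T0fn i0 i1 j0 j1 (i', j) = i' - i0 + 1 := by
      simp [T0fn, hb1', hb2', hb3, hb4]
    rw [e1, e2]
    omega
  · intro t
    exact T0_count lam nu i0 i1 j0 j1 hshape t
  · intro d rr
    haveI hfin : Finite {c : ℕ × ℕ // inSkew lam nu c ∧
        (c.1 < d.1 ∨ (c.1 = d.1 ∧ d.2 ≤ c.2)) ∧ T0fn i0 i1 j0 j1 c = rr + 1} := by
      apply finite_pred _ i1 j1
      rintro c ⟨hcs, -, -⟩
      obtain ⟨-, hA, -, hB⟩ := (hshape c).1 hcs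
      exact ⟨hA, hB⟩
    have key : ∀ c : ℕ × ℕ, (inSkew lam nu c ∧
        (c.1 < d.1 ∨ (c.1 = d.1 ∧ d.2 ≤ c.2)) ∧ T0fn i0 i1 j0 j1 c = rr + 2) →
        (inSkew lam nu (c.1 - 1, c.2) ∧
          ((c.1 - 1 : ℕ) < d.1 ∨ ((c.1 - 1 : ℕ) = d.1 ∧ d.2 ≤ c.2)) ∧
          T0fn i0 i1 j0 j1 (c.1 - 1, c.2) = rr + 1) ∧ c.1 = i0 + rr + 1 := by
      rintro c ⟨hcs, hcpre, hcv⟩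
      obtain ⟨hc1, hc2, hc3, hc4⟩ := (hshape c).1 hcs
      rw [T0fn, if_pos ⟨hc1, hc2, hc3, hc4⟩] at hcv
      have hc1' : c.1 = i0 + rr + 1 := by omega
      have hbnew : i0 ≤ c.1 - 1 ∧ c.1 - 1 < i1 ∧ j0 ≤ c.2 ∧ c.2 < j1 :=
        ⟨by omega, by omega, hc3, hc4⟩
      refine ⟨⟨(hshape (c.1 - 1, c.2)).2 hbnew, ?_, ?_⟩, hc1'⟩
      · rcases hcpre with h | ⟨h, h'⟩
        · exact Or.inl (by omega)
        · exact Or.inl (by omega)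
      · rw [T0fn, if_pos (show i0 ≤ (c.1 - 1, c.2).1 ∧ (c.1 - 1, c.2).1 < i1 ∧
            j0 ≤ (c.1 - 1, c.2).2 ∧ (c.1 - 1, c.2).2 < j1 from hbnew)]
        omega
    refine Nat.card_le_card_of_injective
      (fun x => ⟨(x.1.1 - 1, x.1.2), (key x.1 x.2).1⟩) ?_
    rintro ⟨x, hx⟩ ⟨y, hy⟩ hxy
    simp only [Subtype.mk.injEq, Prod.mk.injEq] at hxy
    have hx1 := (key x hx).2
    have hy1 := (key y hy).2
    apply Subtype.ext
    obtain ⟨xa, xb⟩ := x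
    obtain ⟨ya, yb⟩ := y
    simp only [Prod.mk.injEq] at hx1 hy1 hxy ⊢
    omega

lemma rect_skew_lr (lam nu : ℕ → ℕ) (i0 i1 j0 j1 : ℕ)
    (hshape : ∀ c : ℕ × ℕ, inSkew lam nu c ↔ i0 ≤ c.1 ∧ c.1 < i1 ∧ j0 ≤ c.2 ∧ c.2 < j1)
    (mu : ℕ → ℕ) :
    LRcoeff lam mu nu ≠ 0 ↔ mu = fun t => if t < i1 - i0 then j1 - j0 else 0 := by
  constructor
  · intro h
    have h' : Nat.card {T : ℕ × ℕ → ℕ // IsLRFilling lam mu nu T} ≠ 0 := h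
    obtain ⟨⟨⟨T, hT⟩⟩, -⟩ := Nat.card_ne_zero.mp h'
    have hTeq := T0_uniq lam nu i0 i1 j0 j1 hshape mu T hT
    funext t
    have hw := hT.2.2.2.2.1 t
    rw [hTeq] at hw
    show mu t = if t < i1 - i0 then j1 - j0 else 0
    rw [← hw]
    exact (T0_count lam nu i0 i1 j0 j1 hshape t).symm ▸ rfl
  · intro h
    subst h
    have hfill := T0_fill lam nu i0 i1 j0 j1 hshape
    haveI : Subsingleton {T : ℕ × ℕ → ℕ //
        IsLRFilling lam (fun t => if t < i1 - i0 then j1 - j0 else 0) nu T} :=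
      ⟨fun x y => Subtype.ext (by
        rw [T0_uniq lam nu i0 i1 j0 j1 hshape _ x.1 x.2,
          T0_uniq lam nu i0 i1 j0 j1 hshape _ y.1 y.2])⟩
    show Nat.card {T : ℕ × ℕ → ℕ //
        IsLRFilling lam (fun t => if t < i1 - i0 then j1 - j0 else 0) nu T} ≠ 0
    exact Nat.card_ne_zero.mpr ⟨⟨⟨_, hfill⟩⟩, Finite.of_subsingleton⟩

lemma isPartitionFn_two_step (A B u v : ℕ) (hAB : A ≤ B) (hvu : v ≤ u) :
    IsPartitionFn (fun i => if i < A then u else if i < B then v else 0) := by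
  constructor
  · intro i j hij
    dsimp only
    split_ifs <;> omega
  · exact ⟨B, fun i hi => by dsimp only; split_ifs <;> omega⟩

/-- for rectangular partitions `λ = (a^r)` and `μ = (b^s)` of the same
integer, there is exactly one pair of partitions `(λ', μ')` with
`c^λ_{λ∩μ, λ'} ≠ 0` and `c^μ_{λ∩μ, μ'} ≠ 0`, namely the (rectangular) complements
`λ' = λ \ (λ∩μ)` and `μ' = μ \ (λ∩μ)`. -/
theorem rect_unique_complement (a r b s : ℕ)
    (ha : 0 < a) (hr : 0 < r) (hb : 0 < b) (hs : 0 < s)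
    (hsize : a * r = b * s) :
    ∀ lam' mu' : ℕ → ℕ,
      (IsPartitionFn lam' ∧ IsPartitionFn mu' ∧
        LRcoeff (fun i => min (rectFn a r i) (rectFn b s i)) lam' (rectFn a r) ≠ 0 ∧
        LRcoeff (fun i => min (rectFn a r i) (rectFn b s i)) mu' (rectFn b s) ≠ 0) ↔
      (lam' = (fun i => if i < r - min r s then a else if i < r then a - min a b else 0) ∧
       mu' = (fun i => if i < s - min r s then b else if i < s then b - min a b else 0)) := by
  intro lam' mu'
  rcases le_total a b with hab | hba
  · -- a ≤ b, hence s ≤ r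
    have hsr : s ≤ r := by
      have h1 : a * r ≤ b * r := Nat.mul_le_mul_right r hab
      have h2 : b * s ≤ b * r := by omega
      exact Nat.le_of_mul_le_mul_left h2 hb
    have shape1 : ∀ c : ℕ × ℕ,
        inSkew (fun i => min (rectFn a r i) (rectFn b s i)) (rectFn a r) c ↔
          s ≤ c.1 ∧ c.1 < r ∧ 0 ≤ c.2 ∧ c.2 < a := by
      intro c
      simp only [inSkew, rectFn]
      split_ifs <;> omega
    have shape2 : ∀ c : ℕ × ℕ,
        inSkew (fun i => min (rectFn a r i) (rectFn b s i)) (rectFn b s) c ↔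
          0 ≤ c.1 ∧ c.1 < s ∧ a ≤ c.2 ∧ c.2 < b := by
      intro c
      simp only [inSkew, rectFn]
      split_ifs <;> omega
    have L1 := rect_skew_lr _ _ s r 0 a shape1 lam'
    have L2 := rect_skew_lr _ _ 0 s a b shape2 mu'
    have e1 : (fun i => if i < r - min r s then a else if i < r then a - min a b else 0) =
        (fun t => if t < r - s then a - 0 else 0) := by
      funext i
      rw [min_eq_right hsr, min_eq_left hab]
      split_ifs <;> omega
    have e2 : (fun i => if i < s - min r s then b else if i < s then b - min a b else 0) =
        (fun t => if t < s - 0 then b - a else 0) := by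
      funext i
      rw [min_eq_right hsr, min_eq_left hab]
      split_ifs <;> omega
    constructor
    · rintro ⟨-, -, hL, hM⟩
      exact ⟨by rw [e1]; exact L1.mp hL, by rw [e2]; exact L2.mp hM⟩
    · rintro ⟨h1, h2⟩
      subst h1; subst h2
      exact ⟨isPartitionFn_two_step _ _ _ _ (by omega) (by omega),
        isPartitionFn_two_step _ _ _ _ (by omega) (by omega),
        L1.mpr e1, L2.mpr e2⟩
  · -- b ≤ a, hence r ≤ s
    have hrs : r ≤ s := by
      have h1 : b * s ≤ a * s := Nat.mul_le_mul_right s hba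
      have h2 : a * r ≤ a * s := by omega
      exact Nat.le_of_mul_le_mul_left h2 ha
    have shape1 : ∀ c : ℕ × ℕ,
        inSkew (fun i => min (rectFn a r i) (rectFn b s i)) (rectFn a r) c ↔
          0 ≤ c.1 ∧ c.1 < r ∧ b ≤ c.2 ∧ c.2 < a := by
      intro c
      simp only [inSkew, rectFn]
      split_ifs <;> omega
    have shape2 : ∀ c : ℕ × ℕ,
        inSkew (fun i => min (rectFn a r i) (rectFn b s i)) (rectFn b s) c ↔
          r ≤ c.1 ∧ c.1 < s ∧ 0 ≤ c.2 ∧ c.2 < b := by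
      intro c
      simp only [inSkew, rectFn]
      split_ifs <;> omega
    have L1 := rect_skew_lr _ _ 0 r b a shape1 lam'
    have L2 := rect_skew_lr _ _ r s 0 b shape2 mu'
    have e1 : (fun i => if i < r - min r s then a else if i < r then a - min a b else 0) =
        (fun t => if t < r - 0 then a - b else 0) := by
      funext i
      rw [min_eq_left hrs, min_eq_right hba]
      split_ifs <;> omega
    have e2 : (fun i => if i < s - min r s then b else if i < s then b - min a b else 0) =
        (fun t => if t < s - r then b - 0 else 0) := by
      funext i
      rw [min_eq_left hrs, min_eq_right hba]
      split_ifs <;> omega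
    constructor
    · rintro ⟨-, -, hL, hM⟩
      exact ⟨by rw [e1]; exact L1.mp hL, by rw [e2]; exact L2.mp hM⟩
    · rintro ⟨h1, h2⟩
      subst h1; subst h2
      exact ⟨isPartitionFn_two_step _ _ _ _ (by omega) (by omega),
        isPartitionFn_two_step _ _ _ _ (by omega) (by omega),
        L1.mpr e1, L2.mpr e2⟩
end

section
/- Let λ = λ(1) ⊃ ⋯ ⊃ λ(r) ⊃ ∅ and μ = μ(1) ⊃ ⋯ ⊃ μ(r) ⊃ ∅ be strictly decreasing chains of partitions with c^{λ(i)}_{λ(i)∩μ(i), λ(i+1)} ≠ 0 and c^{μ(i)}_{λ(i)∩μ(i), μ(i+1)} ≠ 0 for all 1 ≤ i ≤ r, and set ν_i = |λ(i) ∩ μ(i)|. Then ν = (ν₁, ..., ν_r) is a partition of |λ| (i.e., weakly decreasing with ∑ ν_i = |λ| = |μ|). -/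
/-! The Littlewood–Richardson rule makes `c^ν_{λ,μ} ≠ 0` force `|ν| = |λ| + |μ|`: an LR filling
of `ν / λ` has exactly `μ r` entries `r + 1`, so the skew diagram has `|μ|` cells. Applied to
`λ(i) ⊇ λ(i) ∩ μ(i)` this gives `|λ(i)| = ν_i + |λ(i+1)|`, and the sum telescopes to `|λ|`.
Monotonicity of `ν` is plain containment: `λ(i) ∩ μ(i)` shrinks as `i` grows. -/

def cells (f : ℕ → ℕ) : Set (ℕ × ℕ) := {c | c.2 < f c.1}

lemma psize_eq_ncard (f : ℕ → ℕ) : psize f = (cells f).ncard :=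
  Nat.card_coe_set_eq _

lemma psize_eq_card_sigma (f : ℕ → ℕ) : psize f = Nat.card (Σ i, Fin (f i)) :=
  Nat.card_congr
    { toFun := fun c => ⟨c.1.1, c.1.2, c.2⟩
      invFun := fun x => ⟨(x.1, x.2), x.2.2⟩
      left_inv := fun _ => rfl
      right_inv := fun _ => rfl }

lemma psize_zero : psize 0 = 0 := by
  simp [psize]

lemma cells_mono : Monotone cells :=
  fun _ _ hgf c (hc : c.2 < _) => hc.trans_le (hgf c.1)

lemma IsPartitionFn.finite_cells {f : ℕ → ℕ} (hf : IsPartitionFn f) : (cells f).Finite := by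
  obtain ⟨hanti, N, hN⟩ := hf
  refine ((Set.finite_Iio N).prod (Set.finite_Iio (f 0))).subset
    fun c (hc : c.2 < f c.1) => ⟨?_, ?_⟩
  · by_contra hNc
    rw [hN c.1 (not_lt.mp hNc)] at hc
    exact Nat.not_lt_zero _ hc
  · exact hc.trans_le (hanti 0 c.1 c.1.zero_le)

lemma psize_mono {f g : ℕ → ℕ} (hgf : g ≤ f) (hf : (cells f).Finite) : psize g ≤ psize f := by
  rw [psize_eq_ncard, psize_eq_ncard]
  exact Set.ncard_le_ncard (cells_mono hgf) hf

lemma IsLRFilling.card_skew_eq_psize {lam mu nu : ℕ → ℕ} {T : ℕ × ℕ → ℕ}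
    (hT : IsLRFilling lam mu nu T) [Finite {c // inSkew lam nu c}] :
    Nat.card {c // inSkew lam nu c} = psize mu := by
  obtain ⟨-, hpos, -, -, hweight, -⟩ := hT
  have hfiber : ∀ t, Nat.card {x : {c // inSkew lam nu c} // T x - 1 = t} = mu t := by
    intro t
    rw [← hweight t]
    refine Nat.card_congr ((Equiv.subtypeSubtypeEquivSubtypeInter _ (fun c => T c - 1 = t)).trans
      (Equiv.subtypeEquivRight fun c => ⟨fun h => ⟨h.1, ?_⟩, fun h => ⟨h.1, ?_⟩⟩))
    · have := hpos c h.1; omega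
    · omega
  calc Nat.card {c // inSkew lam nu c}
      = Nat.card (Σ t, {x : {c // inSkew lam nu c} // T x - 1 = t}) :=
        (Nat.card_congr (Equiv.sigmaFiberEquiv _)).symm
    _ = Nat.card (Σ t, Fin (mu t)) :=
        Nat.card_congr (Equiv.sigmaCongrRight fun t => Finite.equivFinOfCardEq (hfiber t))
    _ = psize mu := (psize_eq_card_sigma mu).symm

lemma psize_eq_add_of_LRcoeff_ne_zero {lam mu nu : ℕ → ℕ} (hle : lam ≤ nu)
    (hnu : (cells nu).Finite) (h : LRcoeff lam mu nu ≠ 0) :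
    psize nu = psize lam + psize mu := by
  obtain ⟨⟨T, hT⟩⟩ := (Nat.card_ne_zero.mp h).1
  have hsplit : cells nu = cells lam ∪ {c | inSkew lam nu c} := by
    ext c
    have : lam c.1 ≤ nu c.1 := hle c.1
    change c.2 < nu c.1 ↔ c.2 < lam c.1 ∨ lam c.1 ≤ c.2 ∧ c.2 < nu c.1
    omega
  have hdisj : Disjoint (cells lam) {c | inSkew lam nu c} :=
    Set.disjoint_left.mpr fun _ hlam hskew => (not_lt.mpr hskew.1) hlam
  rw [hsplit] at hnu
  have hskew : {c | inSkew lam nu c}.Finite := hnu.subset Set.subset_union_right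
  have : Finite {c // inSkew lam nu c} := hskew.to_subtype
  rw [psize_eq_ncard, hsplit, Set.ncard_union_eq hdisj (hnu.subset Set.subset_union_left) hskew,
    psize_eq_ncard, ← hT.card_skew_eq_psize]
  rfl

lemma sum_range_add_eq_of_telescope {M : Type*} [AddCommMonoid M] {a b : ℕ → M} {r : ℕ}
    (h : ∀ k < r, b k = a k + b (k + 1)) : ∑ i ∈ Finset.range r, a i + b r = b 0 := by
  induction r with
  | zero => simp
  | succ n ih =>
    rw [Finset.sum_range_succ, add_assoc, ← h n n.lt_succ_self]
    exact ih fun k hk => h k (hk.trans n.lt_succ_self)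

theorem strip_type_is_partition_general (r : ℕ) (L M : ℕ → ℕ → ℕ)
    (hLp : ∀ i : ℕ, i ≤ r → IsPartitionFn (L i))
    (hLend : ∀ j : ℕ, L r j = 0)
    (hLdec : ∀ i : ℕ, i < r → (∀ j : ℕ, L (i + 1) j ≤ L i j) ∧ L (i + 1) ≠ L i)
    (hMdec : ∀ i : ℕ, i < r → (∀ j : ℕ, M (i + 1) j ≤ M i j) ∧ M (i + 1) ≠ M i)
    (hLc : ∀ i : ℕ, i < r →
      LRcoeff (fun j => min (L i j) (M i j)) (L (i + 1)) (L i) ≠ 0) :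
    (∀ i i' : ℕ, i ≤ i' → i' < r →
        psize (fun j => min (L i' j) (M i' j)) ≤ psize (fun j => min (L i j) (M i j))) ∧
      ∑ i ∈ Finset.range r, psize (fun j => min (L i j) (M i j)) = psize (L 0) := by
  have hL : AntitoneOn L (Set.Iic r) :=
    antitoneOn_of_add_one_le Set.ordConnected_Iic fun k _ _ hk => (hLdec k hk).1
  have hM : AntitoneOn M (Set.Iic r) :=
    antitoneOn_of_add_one_le Set.ordConnected_Iic fun k _ _ hk => (hMdec k hk).1
  refine ⟨fun i i' hii' hi' => ?_, ?_⟩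
  · have hi : i ∈ Set.Iic r := (hii'.trans hi'.le : i ≤ r)
    have hi'r : i' ∈ Set.Iic r := (hi'.le : i' ≤ r)
    exact psize_mono (fun j => min_le_min (hL hi hi'r hii' j) (hM hi hi'r hii' j))
      ((hLp i hi).finite_cells.subset (cells_mono fun j => min_le_left _ (M i j)))
  · have hstep : ∀ k < r,
        psize (L k) = psize (fun j => min (L k j) (M k j)) + psize (L (k + 1)) :=
      fun k hk => psize_eq_add_of_LRcoeff_ne_zero (fun j => min_le_left _ _)
        (hLp k hk.le).finite_cells (hLc k hk)
    have hLr : psize (L r) = 0 := by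
      rw [show L r = 0 from funext hLend, psize_zero]
    simpa [hLr] using sum_range_add_eq_of_telescope hstep

/-- given strictly decreasing chains `λ = λ(0) ⊃ ⋯ ⊃ λ(r) = ∅` and
`μ = μ(0) ⊃ ⋯ ⊃ μ(r) = ∅` of partitions with
`c^{λ(i)}_{λ(i)∩μ(i), λ(i+1)} ≠ 0` and `c^{μ(i)}_{λ(i)∩μ(i), μ(i+1)} ≠ 0` for all
`i < r`, the sequence `ν_i = |λ(i) ∩ μ(i)|` is a partition of `|λ| = |μ|`. -/
theorem strip_type_is_partition (r : ℕ) (hr : 0 < r) (L M : ℕ → ℕ → ℕ)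
    (hLp : ∀ i : ℕ, i ≤ r → IsPartitionFn (L i))
    (hMp : ∀ i : ℕ, i ≤ r → IsPartitionFn (M i))
    (hsz : psize (L 0) = psize (M 0))
    (hLend : ∀ j : ℕ, L r j = 0) (hMend : ∀ j : ℕ, M r j = 0)
    (hLdec : ∀ i : ℕ, i < r → (∀ j : ℕ, L (i + 1) j ≤ L i j) ∧ L (i + 1) ≠ L i)
    (hMdec : ∀ i : ℕ, i < r → (∀ j : ℕ, M (i + 1) j ≤ M i j) ∧ M (i + 1) ≠ M i)
    (hLc : ∀ i : ℕ, i < r →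
      LRcoeff (fun j => min (L i j) (M i j)) (L (i + 1)) (L i) ≠ 0)
    (hMc : ∀ i : ℕ, i < r →
      LRcoeff (fun j => min (L i j) (M i j)) (M (i + 1)) (M i) ≠ 0) :
    (∀ i i' : ℕ, i ≤ i' → i' < r →
        psize (fun j => min (L i' j) (M i' j)) ≤ psize (fun j => min (L i j) (M i j))) ∧
      ∑ i ∈ Finset.range r, psize (fun j => min (L i j) (M i j)) = psize (L 0) :=
  strip_type_is_partition_general r L M hLp hLend hLdec hMdec hLc
end
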